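/- arXiv:1405.2465 — 8 statements merged into one kernel-verified Lean document; each statement's English description precedes it below -/
import Mathlib

section
/- Along any solution of the cosmological system with H(t₀) > 0, H is nonincreasing, H(t) > 0 for all t ≥ t₀ (assuming ρ_m(t₀) > 0), and the limit η = lim_{t→∞} H(t) exists with 0 ≤ η ≤ H(t₀). Moreover ∫_{t₀}^∞ (y² + γρ_m + (4/3)ρ_r) dt = 2(H(t₀) − η) < ∞. -/
open Filter MeasureTheory Set Topology

/-! Since `Ḣ = -(1/2)(y² + γρ_m + (4/3)ρ_r) ≤ 0`, `H` is nonincreasing. The constraint, with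
`V ≥ 0` and `γ ≤ 2`, bounds the integrand by `6H²`, so `Ḣ ≥ -3H²`: `H` decays at most like a
solution `1/(3t + C)` of the Riccati equation and never reaches zero. Being positive and
nonincreasing, `H` converges, and the integral identity is the fundamental theorem of calculus
for `2H` on `[t₀, ∞)`. -/

section Calculus

variable {u u' : ℝ → ℝ} {a : ℝ}

lemma antitoneOn_Ici_of_hasDerivAt_nonpos (hu : ∀ t, a ≤ t → HasDerivAt u (u' t) t)
    (hu' : ∀ t, a ≤ t → u' t ≤ 0) : AntitoneOn u (Ici a) := by
  refine antitoneOn_of_hasDerivWithinAt_nonpos (f' := u') (convex_Ici a)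
    (fun t ht => (hu t ht).continuousAt.continuousWithinAt) ?_ ?_ <;> rw [interior_Ici]
  · exact fun t ht => (hu t (le_of_lt ht)).hasDerivWithinAt
  · exact fun t ht => hu' t (le_of_lt ht)

lemma pos_of_hasDerivAt_ge_neg_mul_sq {k : ℝ} (hk : 0 ≤ k)
    (hu : ∀ t, a ≤ t → HasDerivAt u (u' t) t) (hu' : ∀ t, a ≤ t → -k * u t ^ 2 ≤ u' t)
    (ha : 0 < u a) : ∀ t, a ≤ t → 0 < u t := by
  -- `L` solves `L' = -(k + 1) L²`; decaying strictly faster than `u` can, it stays below `u`.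
  set c := k + 1
  set L : ℝ → ℝ := fun t => u a / (1 + c * u a * (t - a))
  have hden : ∀ t, a ≤ t → 0 < 1 + c * u a * (t - a) := fun t ht => by
    have : 0 ≤ c * u a * (t - a) := by positivity
    linarith
  have hLpos : ∀ t, a ≤ t → 0 < L t := fun t ht => div_pos ha (hden t ht)
  have hL : ∀ t, a ≤ t → HasDerivAt L (-c * L t ^ 2) t := fun t ht => by
    have hlin : HasDerivAt (fun s => 1 + c * u a * (s - a)) (c * u a) t := by
      simpa using ((hasDerivAt_id t).sub_const a).const_mul (c * u a) |>.const_add 1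
    refine ((hasDerivAt_const t (u a)).fun_div hlin (hden t ht).ne').congr_deriv ?_
    simp only [L]
    field_simp
    ring
  intro t ht
  have hLu : L t ≤ u t := by
    refine image_le_of_deriv_right_lt_deriv_boundary' (f' := fun s => -c * L s ^ 2) (B' := u')
      (fun s hs => (hL s hs.1).continuousAt.continuousWithinAt)
      (fun s hs => (hL s hs.1).hasDerivWithinAt) (by simp [L])
      (fun s hs => (hu s hs.1).continuousAt.continuousWithinAt)
      (fun s hs => (hu s hs.1).hasDerivWithinAt) ?_ ⟨ht, le_rfl⟩
    intro s hs hLs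
    have := hLpos s hs.1
    calc -c * L s ^ 2 < -k * L s ^ 2 := by nlinarith
      _ = -k * u s ^ 2 := by rw [hLs]
      _ ≤ u' s := hu' s hs.1
  exact (hLpos t ht).trans_le hLu

lemma AntitoneOn.exists_tendsto_atTop_of_ge {m : ℝ} (hu : AntitoneOn u (Ici a))
    (hm : ∀ t, a ≤ t → m ≤ u t) : ∃ η, m ≤ η ∧ η ≤ u a ∧ Tendsto u atTop (𝓝 η) := by
  set v : ℝ → ℝ := fun t => u (max t a)
  have hv : Antitone v := fun s t hst =>
    hu (le_max_right s a) (le_max_right t a) (max_le_max hst le_rfl)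
  have hvm : ∀ t, m ≤ v t := fun t => hm _ (le_max_right t a)
  have hbdd : BddBelow (range v) := ⟨m, by rintro _ ⟨t, rfl⟩; exact hvm t⟩
  have huv : v =ᶠ[atTop] u := by
    filter_upwards [eventually_ge_atTop a] with t ht
    simp [v, max_eq_left ht]
  refine ⟨⨅ t, v t, le_ciInf hvm, ?_, (tendsto_atTop_ciInf hv hbdd).congr' huv⟩
  simpa [v] using ciInf_le hbdd a

lemma integrableOn_Ici_and_integral_eq_of_hasDerivAt_neg {g : ℝ → ℝ} {η : ℝ}
    (hu : ∀ t, a ≤ t → HasDerivAt u (-g t) t) (hg : ∀ t, a ≤ t → 0 ≤ g t)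
    (hlim : Tendsto u atTop (𝓝 η)) :
    IntegrableOn g (Ici a) ∧ ∫ t in Ici a, g t = u a - η := by
  have hderiv : ∀ t ∈ Ici a, HasDerivAt (fun s => -u s) (g t) t := fun t ht => by
    have := (hu t ht).neg
    rwa [neg_neg] at this
  have hg' : ∀ t ∈ Ioi a, 0 ≤ g t := fun t ht => hg t (le_of_lt ht)
  refine ⟨(integrableOn_Ici_iff_integrableOn_Ioi).mpr
    (integrableOn_Ioi_deriv_of_nonneg' hderiv hg' hlim.neg), ?_⟩
  rw [integral_Ici_eq_integral_Ioi, integral_Ioi_of_hasDerivAt_of_nonneg' hderiv hg' hlim.neg]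
  ring

end Calculus

lemma sq_add_mul_add_le_six_mul_sq_of_constraint {H y V ρm ρr γ : ℝ} (hγ : γ ≤ 2)
    (hV : 0 ≤ V) (hm : 0 ≤ ρm) (hr : 0 ≤ ρr)
    (h : 3 * H ^ 2 = (1/2) * y ^ 2 + V + ρm + ρr) :
    y ^ 2 + γ * ρm + (4/3) * ρr ≤ 6 * H ^ 2 := by
  nlinarith

theorem stmt2_general (H ρm ρr y φ V : ℝ → ℝ) (γ t₀ : ℝ)
    (hγ0 : 0 < γ) (hγ2 : γ < 2)
    (hVnn : ∀ s, 0 ≤ V s)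
    (hH : ∀ t, t₀ ≤ t →
      HasDerivAt H (-(1/2) * (γ * ρm t + (4/3) * ρr t + (y t)^2)) t)
    (hconstraint : ∀ t, t₀ ≤ t →
      3*(H t)^2 = (1/2)*(y t)^2 + V (φ t) + ρm t + ρr t)
    (hrnn : ∀ t, t₀ ≤ t → 0 ≤ ρr t)
    (hmnn : ∀ t, t₀ ≤ t → 0 ≤ ρm t)
    (hH0 : 0 < H t₀) :
    AntitoneOn H (Set.Ici t₀) ∧
    (∀ t, t₀ ≤ t → 0 < H t) ∧
    ∃ η : ℝ, 0 ≤ η ∧ η ≤ H t₀ ∧ Tendsto H atTop (nhds η) ∧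
      IntegrableOn (fun t => (y t)^2 + γ * ρm t + (4/3) * ρr t) (Set.Ici t₀) ∧
      ∫ t in Set.Ici t₀, ((y t)^2 + γ * ρm t + (4/3) * ρr t) = 2 * (H t₀ - η) := by
  have hf_nonneg : ∀ t, t₀ ≤ t → 0 ≤ (y t)^2 + γ * ρm t + (4/3) * ρr t := fun t ht => by
    have := mul_nonneg hγ0.le (hmnn t ht)
    nlinarith [sq_nonneg (y t), hrnn t ht]
  have hf_le : ∀ t, t₀ ≤ t → (y t)^2 + γ * ρm t + (4/3) * ρr t ≤ 6 * H t ^ 2 := fun t ht =>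
    sq_add_mul_add_le_six_mul_sq_of_constraint hγ2.le (hVnn _) (hmnn t ht) (hrnn t ht)
      (hconstraint t ht)
  have hanti : AntitoneOn H (Ici t₀) :=
    antitoneOn_Ici_of_hasDerivAt_nonpos hH fun t ht => by linarith [hf_nonneg t ht]
  have hpos : ∀ t, t₀ ≤ t → 0 < H t :=
    pos_of_hasDerivAt_ge_neg_mul_sq (k := 3) (by norm_num) hH
      (fun t ht => by linarith [hf_le t ht]) hH0
  obtain ⟨η, hη0, hηH, hlim⟩ := hanti.exists_tendsto_atTop_of_ge fun t ht => (hpos t ht).le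
  have h2H : ∀ t, t₀ ≤ t →
      HasDerivAt (fun s => 2 * H s) (-((y t)^2 + γ * ρm t + (4/3) * ρr t)) t := fun t ht =>
    ((hH t ht).const_mul 2).congr_deriv (by ring)
  obtain ⟨hint, hval⟩ :=
    integrableOn_Ici_and_integral_eq_of_hasDerivAt_neg h2H hf_nonneg (hlim.const_mul 2)
  exact ⟨hanti, hpos, η, hη0, hηH, hlim, hint, by simp only [hval]; ring⟩

/-- Along any solution of the flat FLRW cosmological system with `H(t₀) > 0` and
`ρ_m(t₀) > 0`, the Hubble function `H` is nonincreasing, positive for all `t ≥ t₀`,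
its limit `η = lim_{t→∞} H(t)` exists with `0 ≤ η ≤ H(t₀)`, and
`∫_{t₀}^∞ (y² + γρ_m + (4/3)ρ_r) dt = 2(H(t₀) − η) < ∞`. -/
theorem stmt2 (H ρm ρr y φ V χ : ℝ → ℝ) (γ t₀ : ℝ)
    (hγ0 : 0 < γ) (hγ2 : γ < 2)
    (hχpos : ∀ s, 0 < χ s)
    (hVnn : ∀ s, 0 ≤ V s)
    (hH : ∀ t, t₀ ≤ t →
      HasDerivAt H (-(1/2) * (γ * ρm t + (4/3) * ρr t + (y t)^2)) t)
    (hm : ∀ t, t₀ ≤ t →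
      HasDerivAt ρm (-3*γ*H t*ρm t - (1/2)*(4-3*γ)*ρm t*y t*(deriv χ (φ t) / χ (φ t))) t)
    (hr : ∀ t, t₀ ≤ t → HasDerivAt ρr (-4*H t*ρr t) t)
    (hy : ∀ t, t₀ ≤ t →
      HasDerivAt y (-3*H t*y t - deriv V (φ t) + (1/2)*(4-3*γ)*ρm t*(deriv χ (φ t) / χ (φ t))) t)
    (hφ : ∀ t, t₀ ≤ t → HasDerivAt φ (y t) t)
    (hconstraint : ∀ t, t₀ ≤ t →
      3*(H t)^2 = (1/2)*(y t)^2 + V (φ t) + ρm t + ρr t)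
    (hrnn : ∀ t, t₀ ≤ t → 0 ≤ ρr t)
    (hmnn : ∀ t, t₀ ≤ t → 0 ≤ ρm t)
    (hm0 : 0 < ρm t₀) (hH0 : 0 < H t₀) :
    AntitoneOn H (Set.Ici t₀) ∧
    (∀ t, t₀ ≤ t → 0 < H t) ∧
    ∃ η : ℝ, 0 ≤ η ∧ η ≤ H t₀ ∧ Tendsto H atTop (nhds η) ∧
      IntegrableOn (fun t => (y t)^2 + γ * ρm t + (4/3) * ρr t) (Set.Ici t₀) ∧
      ∫ t in Set.Ici t₀, ((y t)^2 + γ * ρm t + (4/3) * ρr t) = 2 * (H t₀ - η) :=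
  stmt2_general H ρm ρr y φ V γ t₀ hγ0 hγ2 hVnn hH hconstraint hrnn hmnn hH0
end

section
/- (Proposition 1) Suppose V ≥ 0 with V(φ) = 0 ⟺ φ = 0, V' is bounded on every set on which V is bounded, and there is a constant K ≠ 0 such that χ'(φ)/χ(φ) ≤ 2K/((2−γ)(4−3γ)) for all φ. Then along any solution of the cosmological system with H(t₀) > 0, lim_{t→∞} (ρ_m(t), ρ_r(t), y(t)) = (0, 0, 0). -/
/-!
The constraint and `ρ_m, ρ_r, V ≥ 0`, `γ < 2` give `-3H² ≤ Ḣ ≤ 0`, so `H` stays positive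
and decreases; hence `3H(t₀)²` bounds the energy density, and with it `V(φ)`, `V'(φ)` and `y`.
The Hubble rate is then a bounded Lyapunov function: `-Ḣ` dominates both `ρ_r` and
`y²/2 + ρ_m`, whose derivatives are bounded above, so both tend to `0`.
-/

open Filter Set Topology

lemma antitoneOn_of_hasDerivAt_nonpos {D : Set ℝ} (hD : Convex ℝ D) {f f' : ℝ → ℝ}
    (hf : ∀ x ∈ D, HasDerivAt f (f' x) x) (hf' : ∀ x ∈ D, f' x ≤ 0) : AntitoneOn f D :=
  antitoneOn_of_hasDerivWithinAt_nonpos hD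
    (fun x hx => (hf x hx).continuousAt.continuousWithinAt)
    (fun x hx => (hf x (interior_subset hx)).hasDerivWithinAt)
    (fun x hx => hf' x (interior_subset hx))

lemma AntitoneOn.exists_tendsto_atTop {α β : Type*} [LinearOrder α]
    [ConditionallyCompleteLinearOrder β] [TopologicalSpace β] [OrderTopology β]
    {f : α → β} {a : α} (hf : AntitoneOn f (Ici a)) (hb : BddBelow (f '' Ici a)) :
    ∃ L, Tendsto f atTop (𝓝 L) := by
  have hanti : Antitone fun t => f (max a t) := fun s t hst =>
    hf (le_max_left a s) (le_max_left a t) (max_le_max_left a hst)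
  have hrange : BddBelow (range fun t => f (max a t)) :=
    hb.mono (range_subset_iff.2 fun t => mem_image_of_mem f (le_max_left a t))
  refine ⟨_, (tendsto_atTop_ciInf hanti hrange).congr' ?_⟩
  filter_upwards [eventually_ge_atTop a] with t ht
  rw [max_eq_right ht]

/-- Comparison with the solution `((f a)⁻¹ + (c + 1) (t - a))⁻¹` of `b' = -(c + 1) b²`,
which `f` cannot cross downwards. -/
lemma pos_of_neg_mul_sq_le_deriv {f f' : ℝ → ℝ} {a c : ℝ} (hc : 0 ≤ c)
    (hf : ∀ t, a ≤ t → HasDerivAt f (f' t) t) (hf' : ∀ t, a ≤ t → -c * f t ^ 2 ≤ f' t)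
    (ha : 0 < f a) {t : ℝ} (ht : a ≤ t) : 0 < f t := by
  set D : ℝ → ℝ := fun s => (f a)⁻¹ + (c + 1) * (s - a)
  have hD : ∀ s, a ≤ s → 0 < D s := fun s hs => by
    have := inv_pos.2 ha
    positivity
  have hDderiv :
      ∀ s, a ≤ s → HasDerivAt (fun s => -(D s)⁻¹) ((c + 1) * ((D s)⁻¹) ^ 2) s := by
    intro s hs
    have hDd : HasDerivAt D (c + 1) s :=
      ((((hasDerivAt_id s).sub_const a).const_mul (c + 1)).const_add (f a)⁻¹).congr_deriv
        (mul_one _)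
    refine (hDd.inv (hD s hs).ne').neg.congr_deriv ?_
    rw [neg_div, neg_neg, div_eq_mul_inv, inv_pow]
  have hcmp := image_le_of_deriv_right_lt_deriv_boundary' (f := fun s => -f s) (a := a) (b := t)
    (fun s hs => (hf s hs.1).continuousAt.neg.continuousWithinAt)
    (fun s hs => (hf s hs.1).neg.hasDerivWithinAt) (by simp [D])
    (fun s hs => (hDderiv s hs.1).continuousAt.continuousWithinAt)
    (fun s hs => (hDderiv s hs.1).hasDerivWithinAt)
    (fun s hs hfs => by
      have hpos := inv_pos.2 (hD s hs.1)
      have := hf' s hs.1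
      rw [show f s = (D s)⁻¹ by linarith] at this
      nlinarith)
    ⟨ht, le_rfl⟩
  exact (inv_pos.2 (hD t ht)).trans_le (neg_le_neg_iff.1 hcmp)

lemma mul_sub_le_sub_of_hasDerivAt {g g' F F' : ℝ → ℝ} {a M c δ t : ℝ} (hM : 0 ≤ M)
    (hc : 0 ≤ c) (hδ : 0 ≤ δ) (ht : a + δ ≤ t)
    (hg : ∀ s, a ≤ s → HasDerivAt g (g' s) s) (hg' : ∀ s, a ≤ s → g' s ≤ M)
    (hF : ∀ s, a ≤ s → HasDerivAt F (F' s) s) (hF' : ∀ s, a ≤ s → F' s ≤ -c * g s) :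
    c * δ * (g t - M * δ) ≤ F (t - δ) - F t := by
  have hδt : t - δ ≤ t := by linarith
  have hI : ∀ s ∈ Icc (t - δ) t, a ≤ s := fun s hs => by linarith [hs.1]
  have hg_lb : ∀ s ∈ Icc (t - δ) t, g t - M * δ ≤ g s := by
    intro s hs
    have hanti : AntitoneOn (fun u => g u - M * u) (Icc (t - δ) t) :=
      antitoneOn_of_hasDerivAt_nonpos (convex_Icc _ _)
        (fun u hu => ((hg u (hI u hu)).sub ((hasDerivAt_id u).const_mul M)).congr_deriv rfl)
        (fun u hu => by simpa using hg' u (hI u hu))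
    have := hanti hs (right_mem_Icc.2 hδt) hs.2
    nlinarith [hs.1]
  set k := c * (g t - M * δ)
  have hanti : AntitoneOn (fun u => F u + k * u) (Icc (t - δ) t) :=
    antitoneOn_of_hasDerivAt_nonpos (convex_Icc _ _)
      (fun u hu => (hF u (hI u hu)).add ((hasDerivAt_id u).const_mul k))
      (fun u hu => by nlinarith [hF' u (hI u hu), hg_lb u hu])
  have := hanti (left_mem_Icc.2 hδt) (right_mem_Icc.2 hδt) hδt
  simp only at this
  linarith

lemma tendsto_zero_of_hasDerivAt_le_neg_mul {g g' F F' : ℝ → ℝ} {a M c : ℝ} (hM : 0 ≤ M)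
    (hc : 0 < c) (hg0 : ∀ t, a ≤ t → 0 ≤ g t)
    (hg : ∀ t, a ≤ t → HasDerivAt g (g' t) t) (hg' : ∀ t, a ≤ t → g' t ≤ M)
    (hF : ∀ t, a ≤ t → HasDerivAt F (F' t) t) (hF' : ∀ t, a ≤ t → F' t ≤ -c * g t)
    (hFb : BddBelow (F '' Ici a)) :
    Tendsto g atTop (𝓝 0) := by
  have hFanti : AntitoneOn F (Ici a) := antitoneOn_of_hasDerivAt_nonpos (convex_Ici a) hF
    fun t ht => by nlinarith [hF' t ht, hg0 t ht]
  obtain ⟨L, hL⟩ := hFanti.exists_tendsto_atTop hFb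
  refine tendsto_order.2 ⟨fun ε hε => ?_, fun ε hε => ?_⟩
  · filter_upwards [eventually_ge_atTop a] with t ht
    linarith [hg0 t ht]
  obtain ⟨δ, hδ, hMδ⟩ := exists_pos_mul_lt (half_pos hε) M
  have hdrop : Tendsto (fun t => F (t - δ) - F t) atTop (𝓝 0) := by
    simpa [sub_eq_add_neg] using (hL.comp (tendsto_atTop_add_const_right _ (-δ) tendsto_id)).sub hL
  filter_upwards [hdrop.eventually (gt_mem_nhds (by positivity : 0 < c * δ * (ε / 2))),
    eventually_ge_atTop (a + δ)] with t hsmall ht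
  have hwindow := mul_sub_le_sub_of_hasDerivAt hM hc.le hδ.le ht hg hg' hF hF'
  have : g t - M * δ < ε / 2 := lt_of_mul_lt_mul_left (hwindow.trans_lt hsmall) (by positivity)
  linarith

/-- The coupling terms `κ ρ q` cancel in the derivative of `y²/2 + ρ`. -/
lemma hasDerivAt_half_sq_add {y ρ : ℝ → ℝ} {t h v q κ γ : ℝ}
    (hy : HasDerivAt y (-3*h*y t - v + κ*ρ t*q) t)
    (hρ : HasDerivAt ρ (-3*γ*h*ρ t - κ*ρ t*y t*q) t) :
    HasDerivAt (fun s => 1/2*(y s)^2 + ρ s) (-3*h*(y t)^2 - v*y t - 3*γ*h*ρ t) t :=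
  (((hy.pow 2).const_mul (1/2)).add hρ).congr_deriv (by push_cast; ring)

lemma tendsto_zero_of_half_sq_add_tendsto_zero {α : Type*} {l : Filter α} {y ρ : α → ℝ}
    (hρ : ∀ᶠ t in l, 0 ≤ ρ t) (h : Tendsto (fun t => 1/2*(y t)^2 + ρ t) l (𝓝 0)) :
    Tendsto ρ l (𝓝 0) ∧ Tendsto y l (𝓝 0) := by
  refine ⟨squeeze_zero' hρ (hρ.mono fun t _ => ?_) h, ?_⟩
  · nlinarith [sq_nonneg (y t)]
  have h2 : Tendsto (fun t => √(2 * (1/2*(y t)^2 + ρ t))) l (𝓝 0) := by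
    simpa using (h.const_mul 2).sqrt
  refine squeeze_zero_norm' (hρ.mono fun t ht => Real.abs_le_sqrt ?_) h2
  nlinarith

theorem stmt3_general (H ρm ρr y φ V χ : ℝ → ℝ) (γ t₀ : ℝ)
    (hγ0 : 0 < γ) (hγ2 : γ < 2)
    (hVnn : ∀ s, 0 ≤ V s)
    (hV'bdd : ∀ A : Set ℝ, (∃ B, ∀ s ∈ A, V s ≤ B) → ∃ B', ∀ s ∈ A, |deriv V s| ≤ B')
    (hH : ∀ t, t₀ ≤ t →
      HasDerivAt H (-(1/2) * (γ * ρm t + (4/3) * ρr t + (y t)^2)) t)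
    (hm : ∀ t, t₀ ≤ t →
      HasDerivAt ρm (-3*γ*H t*ρm t - (1/2)*(4-3*γ)*ρm t*y t*(deriv χ (φ t) / χ (φ t))) t)
    (hr : ∀ t, t₀ ≤ t → HasDerivAt ρr (-4*H t*ρr t) t)
    (hy : ∀ t, t₀ ≤ t →
      HasDerivAt y (-3*H t*y t - deriv V (φ t) + (1/2)*(4-3*γ)*ρm t*(deriv χ (φ t) / χ (φ t))) t)
    (hconstraint : ∀ t, t₀ ≤ t →
      3*(H t)^2 = (1/2)*(y t)^2 + V (φ t) + ρm t + ρr t)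
    (hmnn : ∀ t, t₀ ≤ t → 0 ≤ ρm t)
    (hrnn : ∀ t, t₀ ≤ t → 0 ≤ ρr t)
    (hH0 : 0 < H t₀) :
    Tendsto ρm atTop (nhds 0) ∧ Tendsto ρr atTop (nhds 0) ∧
      Tendsto y atTop (nhds 0) := by
  have hHpos : ∀ t, t₀ ≤ t → 0 < H t := fun t ht =>
    pos_of_neg_mul_sq_le_deriv (c := 3) (by norm_num) hH (fun s hs => by
      nlinarith [hconstraint s hs, hmnn s hs, hrnn s hs, hVnn (φ s)]) hH0 ht
  have hHle : ∀ t, t₀ ≤ t → H t ≤ H t₀ := fun t ht =>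
    antitoneOn_of_hasDerivAt_nonpos (convex_Ici t₀) hH
      (fun s hs => by nlinarith [hmnn s hs, hrnn s hs, sq_nonneg (y s)]) self_mem_Ici ht ht
  have hHbdd : BddBelow (H '' Ici t₀) := ⟨0, forall_mem_image.2 fun t ht => (hHpos t ht).le⟩
  have henergy : ∀ t, t₀ ≤ t → (1/2)*(y t)^2 + V (φ t) + ρm t + ρr t ≤ 3*(H t₀)^2 :=
    fun t ht => by rw [← hconstraint t ht]; nlinarith [hHpos t ht, hHle t ht]
  obtain ⟨B, hB⟩ := hV'bdd {s | V s ≤ 3*(H t₀)^2} ⟨_, fun s hs => hs⟩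
  have hρr := tendsto_zero_of_hasDerivAt_le_neg_mul le_rfl (c := 2/3) (by norm_num) hrnn hr
    (fun t ht => by nlinarith [hHpos t ht, hrnn t ht]) hH
    (fun t ht => by nlinarith [hmnn t ht, sq_nonneg (y t)]) hHbdd
  have hdV : ∀ t, t₀ ≤ t → deriv V (φ t) ^ 2 ≤ B ^ 2 := fun t ht => by
    have hVφ : V (φ t) ≤ 3*(H t₀)^2 := by
      nlinarith [henergy t ht, hmnn t ht, hrnn t ht, sq_nonneg (y t)]
    simpa only [sq_abs] using pow_le_pow_left₀ (abs_nonneg _) (hB _ hVφ) 2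
  have hkin := tendsto_zero_of_hasDerivAt_le_neg_mul (M := (B^2 + 6*(H t₀)^2)/2)
    (c := min (γ/2) 1) (by positivity) (lt_min (half_pos hγ0) one_pos)
    (fun t ht => by nlinarith [hmnn t ht, sq_nonneg (y t)])
    (fun t ht => hasDerivAt_half_sq_add (hy t ht) (hm t ht))
    (fun t ht => by
      nlinarith [henergy t ht, hdV t ht, hmnn t ht, hrnn t ht, hVnn (φ t),
        sq_nonneg (deriv V (φ t) + y t), mul_nonneg (hHpos t ht).le (sq_nonneg (y t)),
        mul_nonneg (mul_nonneg hγ0.le (hHpos t ht).le) (hmnn t ht)])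
    hH
    (fun t ht => by
      nlinarith [hrnn t ht, mul_le_mul_of_nonneg_right (min_le_left (γ/2) 1) (hmnn t ht),
        mul_le_mul_of_nonneg_right (min_le_right (γ/2) 1) (sq_nonneg (y t))])
    hHbdd
  obtain ⟨hρm, hy0⟩ := tendsto_zero_of_half_sq_add_tendsto_zero
    (eventually_ge_atTop t₀ |>.mono hmnn) hkin
  exact ⟨hρm, hρr, hy0⟩

/-- Proposition 1: if `V ≥ 0` with `V(φ) = 0 ⟺ φ = 0`, `V'` is bounded on every set
on which `V` is bounded, and `χ'/χ ≤ 2K/((2−γ)(4−3γ))` for some constant `K ≠ 0`,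
then along any solution of the cosmological system with `H(t₀) > 0`,
`(ρ_m, ρ_r, y) → (0, 0, 0)` as `t → ∞`. -/
theorem stmt3 (H ρm ρr y φ V χ : ℝ → ℝ) (γ t₀ K : ℝ)
    (hγ0 : 0 < γ) (hγ2 : γ < 2) (hγ43 : γ ≠ 4/3)
    (hχpos : ∀ s, 0 < χ s)
    (hVC2 : ContDiff ℝ 2 V) (hχC2 : ContDiff ℝ 2 χ)
    (hVnn : ∀ s, 0 ≤ V s)
    (hVzero : ∀ s, V s = 0 ↔ s = 0)
    (hV'bdd : ∀ A : Set ℝ, (∃ B, ∀ s ∈ A, V s ≤ B) → ∃ B', ∀ s ∈ A, |deriv V s| ≤ B')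
    (hK : K ≠ 0)
    (hχbd : ∀ s, deriv χ s / χ s ≤ 2*K / ((2-γ)*(4-3*γ)))
    (hH : ∀ t, t₀ ≤ t →
      HasDerivAt H (-(1/2) * (γ * ρm t + (4/3) * ρr t + (y t)^2)) t)
    (hm : ∀ t, t₀ ≤ t →
      HasDerivAt ρm (-3*γ*H t*ρm t - (1/2)*(4-3*γ)*ρm t*y t*(deriv χ (φ t) / χ (φ t))) t)
    (hr : ∀ t, t₀ ≤ t → HasDerivAt ρr (-4*H t*ρr t) t)
    (hy : ∀ t, t₀ ≤ t →
      HasDerivAt y (-3*H t*y t - deriv V (φ t) + (1/2)*(4-3*γ)*ρm t*(deriv χ (φ t) / χ (φ t))) t)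
    (hφ : ∀ t, t₀ ≤ t → HasDerivAt φ (y t) t)
    (hconstraint : ∀ t, t₀ ≤ t →
      3*(H t)^2 = (1/2)*(y t)^2 + V (φ t) + ρm t + ρr t)
    (hmnn : ∀ t, t₀ ≤ t → 0 ≤ ρm t)
    (hrnn : ∀ t, t₀ ≤ t → 0 ≤ ρr t)
    (hH0 : 0 < H t₀) :
    Tendsto ρm atTop (nhds 0) ∧ Tendsto ρr atTop (nhds 0) ∧
      Tendsto y atTop (nhds 0) :=
  stmt3_general H ρm ρr y φ V χ γ t₀ hγ0 hγ2 hVnn hV'bdd hH hm hr hy hconstraint hmnn hrnn hH0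
end

section
/- (Proposition 2) Under the hypotheses of Proposition 1, suppose additionally that V'(φ) > 0 for φ > 0 and V'(φ) < 0 for φ < 0. Then lim_{t→∞} φ(t) exists (in the extended reals) and equals +∞, 0, or −∞. -/
/-!
From `H' = -(γ ρ_m + 4 ρ_r / 3 + y²) / 2` and the constraint, `|H'| ≤ 3 H²`, so `H` cannot cross
zero; it is then nonincreasing and converges. Hence the integrals of `y²` (and so of `|y|`) and of
`ρ_m` over windows of fixed length tend to `0`, while `|y| ≤ 3 H(t₀)`.
If `φ` came back at arbitrarily late times to some `[a, b] ⊂ (0, ∞)`, it would barely move during a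
long window, so that `y' ≈ -V'(φ) ≤ -δ < 0` there, and `y` would fall below its bound. Thus `φ`
eventually avoids every compact subset of `(0, ∞)` and of `(-∞, 0)`; being continuous, it tends to
`+∞`, `0` or `-∞`.
-/

open Filter Set Topology

lemma eq_zero_of_abs_deriv_le_mul_abs {f f' : ℝ → ℝ} {a b K : ℝ}
    (hf : ContinuousOn f (Icc a b)) (hf' : ∀ x ∈ Ico a b, HasDerivAt f (f' x) x)
    (ha : f a = 0) (hbound : ∀ x ∈ Ico a b, |f' x| ≤ K * |f x|) :
    ∀ x ∈ Icc a b, f x = 0 := by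
  intro x hx
  have h := norm_le_gronwallBound_of_norm_deriv_right_le (δ := 0) (ε := 0) hf
    (fun t ht => (hf' t ht).hasDerivWithinAt) (by simp [ha]) (by simpa using hbound) x hx
  rw [gronwallBound_ε0_δ0] at h
  exact norm_le_zero_iff.mp h

/-- At a zero of `f`, the linear bound `|f'| ≤ |C| (sup |f|) |f|` and Gronwall's uniqueness force
`f` to vanish from then on, so `f` cannot cross zero. -/
lemma nonneg_of_abs_deriv_le_mul_sq {f f' : ℝ → ℝ} {t₀ C : ℝ}
    (hf : ∀ t, t₀ ≤ t → HasDerivAt f (f' t) t) (hf' : ∀ t, t₀ ≤ t → |f' t| ≤ C * f t ^ 2)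
    (h₀ : 0 ≤ f t₀) {t : ℝ} (ht : t₀ ≤ t) : 0 ≤ f t := by
  by_contra! hneg
  have hcont : ContinuousOn f (Icc t₀ t) := fun x hx => (hf x hx.1).continuousAt.continuousWithinAt
  obtain ⟨s, hs, hfs⟩ := intermediate_value_Icc' ht hcont ⟨hneg.le, h₀⟩
  have hcont' : ContinuousOn f (Icc s t) := hcont.mono (Icc_subset_Icc_left hs.1)
  obtain ⟨M, hM⟩ := isCompact_Icc.exists_bound_of_continuousOn hcont'
  have hbound : ∀ x ∈ Ico s t, |f' x| ≤ |C| * M * |f x| := by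
    intro x hx
    have hx₀ : t₀ ≤ x := hs.1.trans hx.1
    have hfx : |f x| ≤ M := by simpa using hM x (Ico_subset_Icc_self hx)
    calc |f' x| ≤ C * f x ^ 2 := hf' x hx₀
      _ ≤ |C| * (|f x| * |f x|) := by rw [abs_mul_abs_self, ← sq]; gcongr; exact le_abs_self C
      _ ≤ |C| * M * |f x| := by rw [mul_assoc]; gcongr
  have := eq_zero_of_abs_deriv_le_mul_abs hcont' (fun x hx => hf x (hs.1.trans hx.1)) hfs hbound
    t ⟨hs.2, le_rfl⟩
  linarith

lemma AntitoneOn.exists_tendsto_atTop_s4 {f : ℝ → ℝ} {t₀ : ℝ} (hf : AntitoneOn f (Ici t₀))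
    (hbdd : BddBelow (f '' Ici t₀)) : ∃ η, Tendsto f atTop (𝓝 η) := by
  set g : ℝ → ℝ := fun t => f (max t t₀)
  have hg : Antitone g := fun u v huv =>
    hf (mem_Ici.2 (le_max_right _ _)) (mem_Ici.2 (le_max_right _ _)) (max_le_max huv le_rfl)
  have hgbdd : BddBelow (range g) :=
    hbdd.mono (range_subset_iff.2 fun t => mem_image_of_mem f (mem_Ici.2 (le_max_right t t₀)))
  refine ⟨_, (tendsto_atTop_ciInf hg hgbdd).congr' ?_⟩
  filter_upwards [eventually_ge_atTop t₀] with t ht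
  simp [g, max_eq_left ht]

lemma tendsto_integral_window_of_le_neg_deriv {F F' g : ℝ → ℝ} {t₀ T η : ℝ} (hT : 0 ≤ T)
    (hF : ∀ t, t₀ ≤ t → HasDerivAt F (F' t) t) (hF_lim : Tendsto F atTop (𝓝 η))
    (hg : ContinuousOn g (Ici t₀)) (hg₀ : ∀ t, t₀ ≤ t → 0 ≤ g t)
    (hgF : ∀ t, t₀ ≤ t → g t ≤ -F' t) :
    Tendsto (fun t => ∫ s in t..t + T, g s) atTop (𝓝 0) := by
  have hdiff : Tendsto (fun t => F t - F (t + T)) atTop (𝓝 0) := by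
    simpa using hF_lim.sub (hF_lim.comp (tendsto_atTop_add_const_right _ T tendsto_id))
  refine squeeze_zero' ?_ ?_ hdiff
  · filter_upwards [eventually_ge_atTop t₀] with t ht
    exact intervalIntegral.integral_nonneg (by linarith) fun s hs => hg₀ s (ht.trans hs.1)
  · filter_upwards [eventually_ge_atTop t₀] with t ht
    have hsub : Icc t (t + T) ⊆ Ici t₀ := fun s hs => ht.trans hs.1
    have h := intervalIntegral.integral_le_sub_of_hasDeriv_right_of_le (g := fun s => -F s)
      (g' := fun s => -F' s) (by linarith)
      (fun s hs => (hF s (hsub hs)).continuousAt.continuousWithinAt.neg)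
      (fun s hs => (hF s (hsub (Ioo_subset_Icc_self hs))).neg.hasDerivWithinAt)
      ((hg.mono hsub).integrableOn_Icc) (fun s hs => hgF s (hsub (Ioo_subset_Icc_self hs)))
    linarith

lemma abs_le_sq_div_add (x : ℝ) {ε : ℝ} (hε : 0 < ε) : |x| ≤ x ^ 2 / ε + ε / 4 := by
  rw [div_add_div _ _ hε.ne' four_ne_zero, le_div_iff₀ (by positivity)]
  nlinarith [sq_nonneg (|x| - ε / 2), sq_abs x]

lemma tendsto_integral_window_abs_of_sq {f : ℝ → ℝ} {t₀ T : ℝ} (hT : 0 ≤ T)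
    (hf : ContinuousOn f (Ici t₀))
    (h : Tendsto (fun t => ∫ s in t..t + T, f s ^ 2) atTop (𝓝 0)) :
    Tendsto (fun t => ∫ s in t..t + T, |f s|) atTop (𝓝 0) := by
  refine tendsto_order.2 ⟨fun e he => ?_, fun e he => ?_⟩
  · filter_upwards [eventually_ge_atTop t₀] with t ht
    exact he.trans_le (intervalIntegral.integral_nonneg (by linarith) fun _ _ => abs_nonneg _)
  · set ε := e / (T + 1)
    have hε : 0 < ε := by positivity
    filter_upwards [h.eventually_lt_const (by positivity : 0 < ε * e / 2),
      eventually_ge_atTop t₀] with t hsq ht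
    have hcont : ContinuousOn f (Icc t (t + T)) := hf.mono fun s hs => ht.trans hs.1
    have hsq_int : IntervalIntegrable (fun s => f s ^ 2) MeasureTheory.volume t (t + T) :=
      (hcont.pow 2).intervalIntegrable_of_Icc (by linarith)
    have hamgm : ∫ s in t..t + T, |f s| ≤ ∫ s in t..t + T, (f s ^ 2 / ε + ε / 4) :=
      intervalIntegral.integral_mono_on (by linarith) (hcont.abs.intervalIntegrable_of_Icc
        (by linarith)) ((hsq_int.div_const ε).add intervalIntegrable_const)
        fun s _ => abs_le_sq_div_add (f s) hε
    rw [intervalIntegral.integral_add (hsq_int.div_const ε) intervalIntegrable_const,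
      intervalIntegral.integral_div, intervalIntegral.integral_const, add_sub_cancel_left,
      smul_eq_mul] at hamgm
    have h1 : (∫ s in t..t + T, f s ^ 2) / ε < e / 2 := by
      rw [div_lt_iff₀ hε]; linarith
    have h2 : T * (ε / 4) < e / 2 := by
      have : T * ε < e := by
        rw [show T * ε = e * (T / (T + 1)) by simp only [ε]; ring]
        exact mul_lt_of_lt_one_right he ((div_lt_one (by linarith)).2 (by linarith))
      linarith
    linarith

lemma abs_sub_le_integral_abs_deriv {f f' : ℝ → ℝ} {a b c : ℝ} (hab : a ≤ b) (hbc : b ≤ c)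
    (hf : ∀ x ∈ Icc a c, HasDerivAt f (f' x) x) (hf' : ContinuousOn f' (Icc a c)) :
    |f b - f a| ≤ ∫ x in a..c, |f' x| := by
  have hsub : Icc a b ⊆ Icc a c := Icc_subset_Icc_right hbc
  rw [← intervalIntegral.integral_eq_sub_of_hasDerivAt
    (fun x hx => hf x (hsub (by rwa [uIcc_of_le hab] at hx)))
    ((hf'.mono hsub).intervalIntegrable_of_Icc hab)]
  calc _ ≤ ∫ x in a..b, |f' x| := intervalIntegral.abs_integral_le_integral_abs hab
    _ ≤ _ := intervalIntegral.integral_mono_interval le_rfl hab hbc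
        (Eventually.of_forall fun x => abs_nonneg (f' x))
        (hf'.abs.intervalIntegrable_of_Icc (hab.trans hbc))

/-- A late visit to `[a, b]` keeps `φ` inside `[a/2, b + a/2]`, where `G ≥ δ > 0`, for a window of
length `(2Y + 1)/δ`: long enough for the force to push `y` below `-Y`. -/
lemma eventually_notMem_Icc_of_restoring_force {φ y y' ρ G R : ℝ → ℝ} {t₀ C Y a b : ℝ}
    (ha : 0 < a) (hG : Continuous G) (hR : Continuous R) (hG_pos : ∀ s, 0 < s → 0 < G s)
    (hφ : ∀ t, t₀ ≤ t → HasDerivAt φ (y t) t) (hy : ∀ t, t₀ ≤ t → HasDerivAt y (y' t) t)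
    (hy' : ∀ t, t₀ ≤ t → y' t ≤ -G (φ t) + C * |y t| + R (φ t) * ρ t)
    (hρ : ContinuousOn ρ (Ici t₀)) (hρ₀ : ∀ t, t₀ ≤ t → 0 ≤ ρ t)
    (hY : ∀ t, t₀ ≤ t → |y t| ≤ Y)
    (hy_int : ∀ T, 0 ≤ T → Tendsto (fun t => ∫ s in t..t + T, |y s|) atTop (𝓝 0))
    (hρ_int : ∀ T, 0 ≤ T → Tendsto (fun t => ∫ s in t..t + T, ρ s) atTop (𝓝 0)) :
    ∀ᶠ t in atTop, φ t ∉ Icc a b := by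
  set P := Icc (a / 2) (b + a / 2)
  obtain ⟨δ, hδ, hδG⟩ := isCompact_Icc.exists_forall_le' (s := P) hG.continuousOn
    (a := 0) fun s hs => hG_pos s (by linarith [hs.1])
  obtain ⟨M, hM⟩ := isCompact_Icc.exists_bound_of_continuousOn (s := P) hR.continuousOn
  have hY₀ : 0 ≤ Y := (abs_nonneg _).trans (hY t₀ le_rfl)
  set T := (2 * Y + 1) / δ
  have hT : 0 < T := by positivity
  have hδT : δ * T = 2 * Y + 1 := by simp only [T]; field_simp
  have hyc : ContinuousOn y (Ici t₀) := fun t ht => (hy t ht).continuousAt.continuousWithinAt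
  have hsmall : Tendsto (fun t => (C * ∫ s in t..t + T, |y s|) + M * ∫ s in t..t + T, ρ s)
      atTop (𝓝 0) := by
    simpa using ((hy_int T hT.le).const_mul C).add ((hρ_int T hT.le).const_mul M)
  filter_upwards [(hy_int T hT.le).eventually_lt_const (half_pos ha),
    hsmall.eventually_lt_const one_pos, eventually_ge_atTop t₀] with t hy_small hsum ht hφt
  have hwin : Icc t (t + T) ⊆ Ici t₀ := fun s hs => ht.trans hs.1
  have hφP : ∀ s ∈ Icc t (t + T), φ s ∈ P := by
    intro s hs
    have h := abs_le.1 ((abs_sub_le_integral_abs_deriv hs.1 hs.2 (fun x hx => hφ x (hwin hx))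
      (hyc.mono hwin)).trans hy_small.le)
    exact ⟨by linarith [hφt.1], by linarith [hφt.2]⟩
  have hy_int_le : y (t + T) - y t ≤ ∫ s in t..t + T, (-δ + C * |y s| + M * ρ s) := by
    refine intervalIntegral.sub_le_integral_of_hasDeriv_right_of_le (by linarith) (hyc.mono hwin)
      (fun s hs => (hy s (hwin (Ioo_subset_Icc_self hs))).hasDerivWithinAt)
      ((continuousOn_const.add ((hyc.mono hwin).abs.const_smul C)).add
        ((hρ.mono hwin).const_smul M)).integrableOn_Icc fun s hs => ?_
    have hs' := Ioo_subset_Icc_self hs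
    have hRM : R (φ s) ≤ M := (le_abs_self _).trans (by simpa using hM _ (hφP s hs'))
    nlinarith [hy' s (hwin hs'), hδG _ (hφP s hs'), hρ₀ s (hwin hs')]
  have hy_abs_int : IntervalIntegrable (fun s => |y s|) MeasureTheory.volume t (t + T) :=
    (hyc.mono hwin).abs.intervalIntegrable_of_Icc (by linarith)
  have hρ_int' : IntervalIntegrable ρ MeasureTheory.volume t (t + T) :=
    (hρ.mono hwin).intervalIntegrable_of_Icc (by linarith)
  rw [intervalIntegral.integral_add (intervalIntegrable_const.add (hy_abs_int.const_mul C))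
      (hρ_int'.const_mul M), intervalIntegral.integral_add intervalIntegrable_const
      (hy_abs_int.const_mul C), intervalIntegral.integral_const, intervalIntegral.integral_const_mul,
    intervalIntegral.integral_const_mul, add_sub_cancel_left, smul_eq_mul] at hy_int_le
  have hyT := abs_le.1 (hY (t + T) (hwin ⟨by linarith, le_rfl⟩))
  have hyt := abs_le.1 (hY t ht)
  linarith

lemma eventually_lt_or_eventually_gt_of_eventually_notMem_Icc {f : ℝ → ℝ} {t₀ a b : ℝ}
    (hf : ContinuousOn f (Ici t₀)) (hab : a ≤ b) (h : ∀ᶠ t in atTop, f t ∉ Icc a b) :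
    (∀ᶠ t in atTop, f t < a) ∨ ∀ᶠ t in atTop, b < f t := by
  obtain ⟨T, hT⟩ := eventually_atTop.1 (h.and (eventually_ge_atTop t₀))
  have hside : ∀ t, T ≤ t → f t < a ∨ b < f t := fun t ht => by
    have h := (hT t ht).1
    rwa [mem_Icc, not_and_or, not_le, not_le] at h
  have hconn : IsPreconnected (f '' Ici T) :=
    isPreconnected_Ici.image f (hf.mono (Ici_subset_Ici.2 (hT T le_rfl).2))
  have hnot : ∀ s t, T ≤ s → T ≤ t → f s < a → b < f t → False := by
    intro s t hs ht hfs hft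
    obtain ⟨u, hu, hua⟩ := hconn.Icc_subset ⟨s, hs, rfl⟩ ⟨t, ht, rfl⟩ ⟨hfs.le, hab.trans hft.le⟩
    exact (hT u hu).1 (by rw [hua]; exact ⟨le_rfl, hab⟩)
  rcases hside T le_rfl with hT' | hT'
  · exact Or.inl (eventually_atTop.2 ⟨T, fun t ht =>
      (hside t ht).resolve_right fun hft => hnot T t le_rfl ht hT' hft⟩)
  · exact Or.inr (eventually_atTop.2 ⟨T, fun t ht =>
      (hside t ht).resolve_left fun hft => hnot t T ht le_rfl hft hT'⟩)

lemma tendsto_atTop_of_eventually_notMem_Icc {f : ℝ → ℝ} {a : ℝ} (h : ∀ᶠ t in atTop, a < f t)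
    (hout : ∀ b, ∀ᶠ t in atTop, f t ∉ Icc a b) : Tendsto f atTop atTop :=
  tendsto_atTop.2 fun b => by
    filter_upwards [h, hout b] with t hat hbt
    by_contra! hlt
    exact hbt ⟨hat.le, hlt.le⟩

lemma tendsto_atTop_or_nhds_zero_or_atBot {f : ℝ → ℝ} {t₀ : ℝ} (hf : ContinuousOn f (Ici t₀))
    (hpos : ∀ a b, 0 < a → ∀ᶠ t in atTop, f t ∉ Icc a b)
    (hneg : ∀ a b, 0 < a → ∀ᶠ t in atTop, -f t ∉ Icc a b) :
    Tendsto f atTop atTop ∨ Tendsto f atTop (𝓝 0) ∨ Tendsto f atTop atBot := by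
  have below : ∀ {g : ℝ → ℝ} {a : ℝ}, 0 < a → (∀ᶠ t in atTop, g t < 1) →
      (∀ᶠ t in atTop, g t ∉ Icc a 1) → ∀ᶠ t in atTop, g t < a := fun _ h₁ h₂ => by
    filter_upwards [h₁, h₂] with t h₁ h₂
    by_contra! hle
    exact h₂ ⟨hle, h₁.le⟩
  rcases eventually_lt_or_eventually_gt_of_eventually_notMem_Icc hf one_le_two (hpos 1 2 one_pos)
    with hlt | hgt
  · rcases eventually_lt_or_eventually_gt_of_eventually_notMem_Icc hf.neg one_le_two
      (hneg 1 2 one_pos) with hlt' | hgt'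
    · refine Or.inr (Or.inl (tendsto_order.2 ⟨fun a ha => ?_, fun a ha => ?_⟩))
      · filter_upwards [below (neg_pos.2 ha) hlt' (hneg (-a) 1 (neg_pos.2 ha))] with t ht
        rw [Pi.neg_apply] at ht
        linarith
      · exact below ha hlt (hpos a 1 ha)
    · exact Or.inr (Or.inr (tendsto_neg_atTop_iff.1
        (tendsto_atTop_of_eventually_notMem_Icc hgt' fun b => hneg 2 b two_pos)))
  · exact Or.inl (tendsto_atTop_of_eventually_notMem_Icc hgt fun b => hpos 2 b two_pos)

theorem tendsto_atTop_or_nhds_zero_or_atBot_of_damped {φ y D ρ U c : ℝ → ℝ} {t₀ D₀ Y : ℝ}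
    (hU : Continuous U) (hc : Continuous c)
    (hU_pos : ∀ s, 0 < s → 0 < U s) (hU_neg : ∀ s, s < 0 → U s < 0)
    (hφ : ∀ t, t₀ ≤ t → HasDerivAt φ (y t) t)
    (hy : ∀ t, t₀ ≤ t → HasDerivAt y (-D t * y t - U (φ t) + c (φ t) * ρ t) t)
    (hD : ∀ t, t₀ ≤ t → |D t| ≤ D₀)
    (hρ : ContinuousOn ρ (Ici t₀)) (hρ₀ : ∀ t, t₀ ≤ t → 0 ≤ ρ t)
    (hY : ∀ t, t₀ ≤ t → |y t| ≤ Y)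
    (hy_int : ∀ T, 0 ≤ T → Tendsto (fun t => ∫ s in t..t + T, |y s|) atTop (𝓝 0))
    (hρ_int : ∀ T, 0 ≤ T → Tendsto (fun t => ∫ s in t..t + T, ρ s) atTop (𝓝 0)) :
    Tendsto φ atTop atTop ∨ Tendsto φ atTop (𝓝 0) ∨ Tendsto φ atTop atBot := by
  have hacc : ∀ t, t₀ ≤ t →
      |(-D t * y t - U (φ t) + c (φ t) * ρ t) + U (φ t)| ≤ D₀ * |y t| + |c (φ t)| * ρ t :=
    fun t ht => calc
      _ = |-(D t * y t) + c (φ t) * ρ t| := by congr 1; ring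
      _ ≤ |D t * y t| + |c (φ t) * ρ t| := (abs_add_le _ _).trans_eq (by rw [abs_neg])
      _ ≤ D₀ * |y t| + |c (φ t)| * ρ t := by
        rw [abs_mul, abs_mul, abs_of_nonneg (hρ₀ t ht)]
        gcongr
        exact hD t ht
  refine tendsto_atTop_or_nhds_zero_or_atBot
    (fun t ht => (hφ t ht).continuousAt.continuousWithinAt)
    (fun a b ha => eventually_notMem_Icc_of_restoring_force (C := D₀) ha hU hc.abs hU_pos hφ hy
      (fun t ht => by linarith [(abs_le.1 (hacc t ht)).2]) hρ hρ₀ hY hy_int hρ_int)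
    (fun a b ha => eventually_notMem_Icc_of_restoring_force (C := D₀) (G := fun s => -U (-s))
      (R := fun s => |c (-s)|) ha (hU.comp continuous_neg).neg (hc.comp continuous_neg).abs
      (fun s hs => neg_pos.2 (hU_neg _ (neg_neg_of_pos hs)))
      (fun t ht => (hφ t ht).neg) (fun t ht => (hy t ht).neg)
      (fun t ht => by simp only [neg_neg, abs_neg]; linarith [(abs_le.1 (hacc t ht)).1])
      hρ hρ₀ (by simpa using hY) (by simpa using hy_int) hρ_int)

lemma hubble_nonneg {H ρm ρr y φ V : ℝ → ℝ} {γ t₀ : ℝ} (hγ0 : 0 < γ) (hγ2 : γ < 2)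
    (hVnn : ∀ s, 0 ≤ V s)
    (hH : ∀ t, t₀ ≤ t → HasDerivAt H (-(1/2) * (γ * ρm t + (4/3) * ρr t + (y t)^2)) t)
    (hconstraint : ∀ t, t₀ ≤ t → 3*(H t)^2 = (1/2)*(y t)^2 + V (φ t) + ρm t + ρr t)
    (hmnn : ∀ t, t₀ ≤ t → 0 ≤ ρm t) (hrnn : ∀ t, t₀ ≤ t → 0 ≤ ρr t) (hH0 : 0 ≤ H t₀)
    {t : ℝ} (ht : t₀ ≤ t) : 0 ≤ H t := by
  refine nonneg_of_abs_deriv_le_mul_sq hH (C := 3) (fun s hs => ?_) hH0 ht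
  have hcon := hconstraint s hs
  rw [abs_of_nonpos (by nlinarith [hmnn s hs, hrnn s hs, sq_nonneg (y s)])]
  nlinarith [hmnn s hs, hrnn s hs, hVnn (φ s)]

lemma hubble_antitoneOn {H ρm ρr y : ℝ → ℝ} {γ t₀ : ℝ} (hγ0 : 0 < γ)
    (hH : ∀ t, t₀ ≤ t → HasDerivAt H (-(1/2) * (γ * ρm t + (4/3) * ρr t + (y t)^2)) t)
    (hmnn : ∀ t, t₀ ≤ t → 0 ≤ ρm t) (hrnn : ∀ t, t₀ ≤ t → 0 ≤ ρr t) :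
    AntitoneOn H (Ici t₀) := by
  refine antitoneOn_of_hasDerivWithinAt_nonpos (convex_Ici t₀)
    (fun t ht => (hH t ht).continuousAt.continuousWithinAt)
    (fun t ht => (hH t (interior_subset ht)).hasDerivWithinAt) fun t ht => ?_
  have ht' : t₀ ≤ t := interior_subset ht
  nlinarith [hmnn t ht', hrnn t ht', sq_nonneg (y t)]

theorem stmt4_general (H ρm ρr y φ V χ : ℝ → ℝ) (γ t₀ : ℝ)
    (hγ0 : 0 < γ) (hγ2 : γ < 2)
    (hχpos : ∀ s, 0 < χ s)
    (hVC2 : ContDiff ℝ 2 V) (hχC2 : ContDiff ℝ 2 χ)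
    (hVnn : ∀ s, 0 ≤ V s)
    (hH : ∀ t, t₀ ≤ t →
      HasDerivAt H (-(1/2) * (γ * ρm t + (4/3) * ρr t + (y t)^2)) t)
    (hm : ∀ t, t₀ ≤ t →
      HasDerivAt ρm (-3*γ*H t*ρm t - (1/2)*(4-3*γ)*ρm t*y t*(deriv χ (φ t) / χ (φ t))) t)
    (hy : ∀ t, t₀ ≤ t →
      HasDerivAt y (-3*H t*y t - deriv V (φ t) + (1/2)*(4-3*γ)*ρm t*(deriv χ (φ t) / χ (φ t))) t)
    (hφ : ∀ t, t₀ ≤ t → HasDerivAt φ (y t) t)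
    (hconstraint : ∀ t, t₀ ≤ t →
      3*(H t)^2 = (1/2)*(y t)^2 + V (φ t) + ρm t + ρr t)
    (hmnn : ∀ t, t₀ ≤ t → 0 ≤ ρm t)
    (hrnn : ∀ t, t₀ ≤ t → 0 ≤ ρr t)
    (hH0 : 0 < H t₀)
    (hVinc : ∀ s, 0 < s → 0 < deriv V s)
    (hVdec : ∀ s, s < 0 → deriv V s < 0) :
    Tendsto φ atTop atTop ∨ Tendsto φ atTop (nhds 0) ∨ Tendsto φ atTop atBot := by
  have hH_nonneg : ∀ t, t₀ ≤ t → 0 ≤ H t := fun t ht =>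
    hubble_nonneg hγ0 hγ2 hVnn hH hconstraint hmnn hrnn hH0.le ht
  have hH_anti := hubble_antitoneOn hγ0 hH hmnn hrnn
  have hH_le : ∀ t, t₀ ≤ t → H t ≤ H t₀ := fun t ht => hH_anti self_mem_Ici ht ht
  obtain ⟨η, hη⟩ := hH_anti.exists_tendsto_atTop_s4 ⟨0, forall_mem_image.2 hH_nonneg⟩
  have hY : ∀ t, t₀ ≤ t → |y t| ≤ 3 * H t₀ := fun t ht => abs_le_of_sq_le_sq
    (by nlinarith [hconstraint t ht, hVnn (φ t), hmnn t ht, hrnn t ht, hH_le t ht, hH_nonneg t ht])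
    (by linarith)
  have hyc : ContinuousOn y (Ici t₀) := fun t ht => (hy t ht).continuousAt.continuousWithinAt
  -- `y² ≤ -2 H'` and `ρ_m ≤ -(2/γ) H'`, while `H` converges.
  have hy_int : ∀ T, 0 ≤ T → Tendsto (fun t => ∫ s in t..t + T, |y s|) atTop (𝓝 0) :=
    fun T hT => tendsto_integral_window_abs_of_sq hT hyc
      (tendsto_integral_window_of_le_neg_deriv hT (fun t ht => (hH t ht).const_mul 2)
        (hη.const_mul 2) (hyc.pow 2) (fun t _ => sq_nonneg _)
        fun t ht => by nlinarith [hmnn t ht, hrnn t ht])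
  have hρ_int : ∀ T, 0 ≤ T → Tendsto (fun t => ∫ s in t..t + T, ρm s) atTop (𝓝 0) :=
    fun T hT => tendsto_integral_window_of_le_neg_deriv hT
      (fun t ht => (hH t ht).const_mul (2 / γ)) (hη.const_mul (2 / γ))
      (fun t ht => (hm t ht).continuousAt.continuousWithinAt) hmnn fun t ht => by
        field_simp
        nlinarith [hrnn t ht, sq_nonneg (y t)]
  exact tendsto_atTop_or_nhds_zero_or_atBot_of_damped (D := fun t => 3 * H t) (D₀ := 3 * H t₀)
    (c := fun s => (1/2) * (4 - 3*γ) * (deriv χ s / χ s)) (hVC2.continuous_deriv (by norm_num))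
    (continuous_const.mul ((hχC2.continuous_deriv (by norm_num)).div hχC2.continuous
      fun s => (hχpos s).ne'))
    hVinc hVdec hφ (fun t ht => (hy t ht).congr_deriv (by ring))
    (fun t ht => by rw [abs_of_nonneg (by linarith [hH_nonneg t ht])]; linarith [hH_le t ht])
    (fun t ht => (hm t ht).continuousAt.continuousWithinAt) hmnn hY hy_int hρ_int

/-- Proposition 1: if `V ≥ 0` with `V(φ) = 0 ⟺ φ = 0`, `V'` is bounded on every set
on which `V` is bounded, and `χ'/χ ≤ 2K/((2−γ)(4−3γ))` for some constant `K ≠ 0`,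
then along any solution of the cosmological system with `H(t₀) > 0`,
`(ρ_m, ρ_r, y) → (0, 0, 0)` as `t → ∞`. -/
theorem stmt4 (H ρm ρr y φ V χ : ℝ → ℝ) (γ t₀ K : ℝ)
    (hγ0 : 0 < γ) (hγ2 : γ < 2) (hγ43 : γ ≠ 4/3)
    (hχpos : ∀ s, 0 < χ s)
    (hVC2 : ContDiff ℝ 2 V) (hχC2 : ContDiff ℝ 2 χ)
    (hVnn : ∀ s, 0 ≤ V s)
    (hVzero : ∀ s, V s = 0 ↔ s = 0)
    (hV'bdd : ∀ A : Set ℝ, (∃ B, ∀ s ∈ A, V s ≤ B) → ∃ B', ∀ s ∈ A, |deriv V s| ≤ B')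
    (hK : K ≠ 0)
    (hχbd : ∀ s, deriv χ s / χ s ≤ 2*K / ((2-γ)*(4-3*γ)))
    (hH : ∀ t, t₀ ≤ t →
      HasDerivAt H (-(1/2) * (γ * ρm t + (4/3) * ρr t + (y t)^2)) t)
    (hm : ∀ t, t₀ ≤ t →
      HasDerivAt ρm (-3*γ*H t*ρm t - (1/2)*(4-3*γ)*ρm t*y t*(deriv χ (φ t) / χ (φ t))) t)
    (hr : ∀ t, t₀ ≤ t → HasDerivAt ρr (-4*H t*ρr t) t)
    (hy : ∀ t, t₀ ≤ t →
      HasDerivAt y (-3*H t*y t - deriv V (φ t) + (1/2)*(4-3*γ)*ρm t*(deriv χ (φ t) / χ (φ t))) t)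
    (hφ : ∀ t, t₀ ≤ t → HasDerivAt φ (y t) t)
    (hconstraint : ∀ t, t₀ ≤ t →
      3*(H t)^2 = (1/2)*(y t)^2 + V (φ t) + ρm t + ρr t)
    (hmnn : ∀ t, t₀ ≤ t → 0 ≤ ρm t)
    (hrnn : ∀ t, t₀ ≤ t → 0 ≤ ρr t)
    (hH0 : 0 < H t₀)
    (hVinc : ∀ s, 0 < s → 0 < deriv V s)
    (hVdec : ∀ s, s < 0 → deriv V s < 0) :
    Tendsto φ atTop atTop ∨ Tendsto φ atTop (nhds 0) ∨ Tendsto φ atTop atBot :=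
  stmt4_general H ρm ρr y φ V χ γ t₀ hγ0 hγ2 hχpos hVC2 hχC2 hVnn hH hm hy hφ hconstraint hmnn hrnn
    hH0 hVinc hVdec
end

section
/- (Proposition 3) Suppose there is a nonzero constant K with χ'(φ)/χ(φ) ≤ 2K/((2−γ)(4−3γ)), and V satisfies: V ≥ 0, lim_{φ→−∞} V(φ) = +∞, V' continuous with V'(φ) < 0 for all φ, and V' bounded on every set on which V is bounded. Then along any solution with H(t₀) > 0 and ρ_m(t₀), ρ_r(t₀) > 0, lim_{t→∞} (ρ_m, ρ_r, y) = (0,0,0) and lim_{t→∞} φ(t) = +∞. -/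
/-!
Since `3H² ≥ V > 0`, `H` stays positive and, as `Ḣ ≤ 0`, decreases to a limit `L`; hence the
source `γρm + (4/3)ρr + y² = -2Ḣ` is integrable on `[t₀, ∞)`. In `d/dt (ρm + y²/2)` the coupling
terms cancel, so `ρm + y²/2` and `ρr` are nonnegative, integrable, and have derivatives bounded
below along the bounded orbit; a one-sided Barbalat argument sends them to `0`. The constraint then
gives `V(φ) → 3L²`. Were `3L² = V(p)` for some `p`, the strictly decreasing `V` would force `φ → p`
and `ẏ → -V'(p) > 0`, contradicting `y → 0`; so `3L²` lies below every value of `V` and `φ → ∞`.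
-/

open Filter Set Topology MeasureTheory

theorem mul_sub_le_sub_of_hasDerivAt_ge {f f' : ℝ → ℝ} {a C : ℝ}
    (hf : ∀ t ∈ Ici a, HasDerivAt f (f' t) t) (hC : ∀ t ∈ Ici a, C ≤ f' t)
    {s u : ℝ} (hs : a ≤ s) (hsu : s ≤ u) : C * (u - s) ≤ f u - f s := by
  refine (convex_Ici a).mul_sub_le_image_sub_of_le_deriv
    (fun t ht => (hf t ht).continuousAt.continuousWithinAt)
    (fun t ht => (hf t (interior_subset ht)).differentiableAt.differentiableWithinAt)
    (fun t ht => ?_) s hs u (hs.trans hsu) hsu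
  rw [(hf t (interior_subset ht)).deriv]
  exact hC t (interior_subset ht)

theorem tendsto_atTop_of_hasDerivAt_ge {f f' : ℝ → ℝ} {a c : ℝ} (hc : 0 < c)
    (hf : ∀ t ∈ Ici a, HasDerivAt f (f' t) t) (hf' : ∀ t ∈ Ici a, c ≤ f' t) :
    Tendsto f atTop atTop := by
  have hlin : Tendsto (fun t => f a + c * (t - a)) atTop atTop :=
    tendsto_atTop_add_const_left _ _ <|
      (tendsto_atTop_add_const_right _ _ tendsto_id).const_mul_atTop hc
  refine tendsto_atTop_mono' _ ?_ hlin
  filter_upwards [eventually_ge_atTop a] with t ht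
  linarith [mul_sub_le_sub_of_hasDerivAt_ge hf hf' le_rfl ht]

theorem tendsto_zero_of_integrableOn_of_hasDerivAt_ge {f f' : ℝ → ℝ} {a M : ℝ}
    (hf : ∀ t ∈ Ici a, HasDerivAt f (f' t) t) (hf' : ∀ t ∈ Ici a, -M ≤ f' t)
    (hnn : ∀ t ∈ Ici a, 0 ≤ f t) (hint : IntegrableOn f (Ioi a)) :
    Tendsto f atTop (𝓝 0) := by
  set M₁ := max M 1
  have hM₁ : 0 < M₁ := lt_max_of_lt_right one_pos
  have hf'₁ : ∀ t ∈ Ici a, -M₁ ≤ f' t := fun t ht => (neg_le_neg (le_max_left M 1)).trans (hf' t ht)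
  have hii : ∀ s u, a ≤ s → s ≤ u → IntervalIntegrable f volume s u := fun s u hs hsu =>
    (intervalIntegrable_iff_integrableOn_Ioc_of_le hsu).2 <|
      hint.mono_set fun x hx => hs.trans_lt hx.1
  rw [tendsto_order]
  refine ⟨fun b hb => ?_, fun ε hε => ?_⟩
  · filter_upwards [eventually_ge_atTop a] with t ht using hb.trans_le (hnn t ht)
  -- On `[t, t + δ]` we have `f ≥ f t - M₁ δ`, so `δ (f t - ε/2)` is bounded by an integral over a
  -- window sliding to infinity, which tends to `0` since `f` is integrable.
  set δ := ε / (2 * M₁)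
  have hδ : 0 < δ := by positivity
  have hF : Tendsto (fun t => ∫ u in a..t, f u) atTop (𝓝 (∫ u in Ioi a, f u)) :=
    intervalIntegral_tendsto_integral_Ioi a hint tendsto_id
  have hslice : Tendsto (fun t => ∫ u in t..t + δ, f u) atTop (𝓝 0) := by
    have := (hF.comp (tendsto_atTop_add_const_right _ δ tendsto_id)).sub hF
    rw [sub_self] at this
    refine this.congr' ?_
    filter_upwards [eventually_ge_atTop a] with t ht
    exact intervalIntegral.integral_interval_sub_left
      (hii _ _ le_rfl (show a ≤ t + δ by linarith)) (hii _ _ le_rfl ht)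
  filter_upwards [eventually_ge_atTop a, hslice.eventually_lt_const (mul_pos hδ (half_pos hε))]
    with t ht hsmall
  have hlow : δ * (f t - ε / 2) ≤ ∫ u in t..t + δ, f u := by
    have : ∫ _ in t..t + δ, (f t - ε / 2) ≤ ∫ u in t..t + δ, f u := by
      refine intervalIntegral.integral_mono_on (by linarith) intervalIntegrable_const
        (hii _ _ ht (by linarith)) fun u hu => ?_
      have := mul_sub_le_sub_of_hasDerivAt_ge hf hf'₁ ht hu.1
      have : M₁ * (u - t) ≤ M₁ * δ := mul_le_mul_of_nonneg_left (by linarith [hu.2]) hM₁.le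
      have : M₁ * δ = ε / 2 := by simp only [δ]; field_simp
      linarith
    rwa [intervalIntegral.integral_const, smul_eq_mul, add_sub_cancel_left] at this
  nlinarith

theorem StrictAnti.tendsto_nhds_of_tendsto_comp {α β γ : Type*} [LinearOrder α]
    [TopologicalSpace α] [OrderTopology α] [LinearOrder β] [TopologicalSpace β] [OrderTopology β]
    {V : α → β} (hV : StrictAnti V) {φ : γ → α} {l : Filter γ} {p : α}
    (h : Tendsto (fun t => V (φ t)) l (𝓝 (V p))) : Tendsto φ l (𝓝 p) := by
  rw [tendsto_order]
  exact ⟨fun b hb => (h.eventually_lt_const (hV hb)).mono fun t ht => hV.lt_iff_gt.1 ht,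
    fun b hb => (h.eventually_const_lt (hV hb)).mono fun t ht => hV.lt_iff_gt.1 ht⟩

theorem StrictAnti.tendsto_atTop_of_tendsto_comp {α β γ : Type*} [LinearOrder α]
    [LinearOrder β] [TopologicalSpace β] [OrderTopology β]
    {V : α → β} (hV : StrictAnti V) {φ : γ → α} {l : Filter γ} {v : β}
    (h : Tendsto (fun t => V (φ t)) l (𝓝 v)) (hv : ∀ s, v < V s) : Tendsto φ l atTop :=
  tendsto_atTop.2 fun s => (h.eventually_lt_const (hv s)).mono fun _ ht => (hV.lt_iff_gt.1 ht).le

theorem AntitoneOn.exists_tendsto_atTop_s6 {f : ℝ → ℝ} {a b : ℝ} (hf : AntitoneOn f (Ici a))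
    (hb : ∀ t ∈ Ici a, b ≤ f t) : ∃ L, Tendsto f atTop (𝓝 L) := by
  have hanti : Antitone fun t => f (max t a) := fun s t hst =>
    hf (le_max_right s a) (le_max_right t a) (max_le_max_right a hst)
  refine ⟨_, (tendsto_atTop_ciInf hanti ⟨b, ?_⟩).congr' ?_⟩
  · rintro _ ⟨t, rfl⟩
    exact hb _ (le_max_right t a)
  · filter_upwards [eventually_ge_atTop a] with t ht
    rw [max_eq_left ht]

theorem integrableOn_Ioi_of_continuousOn_of_abs_le {f g : ℝ → ℝ} {a c : ℝ}
    (hg : IntegrableOn g (Ioi a)) (hf : ContinuousOn f (Ici a))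
    (hfg : ∀ t ∈ Ioi a, |f t| ≤ c * g t) : IntegrableOn f (Ioi a) :=
  (hg.const_mul c).mono' ((hf.mono Ioi_subset_Ici_self).aestronglyMeasurable measurableSet_Ioi)
    ((ae_restrict_iff' measurableSet_Ioi).2 (Eventually.of_forall hfg))

namespace ScalarTensor

-- `q` stands for the coupling `(ln χ)' = χ'/χ`.
structure IsSolution (V q : ℝ → ℝ) (γ t₀ : ℝ) (H ρm ρr y φ : ℝ → ℝ) : Prop where
  hasDerivAt_H : ∀ t, t₀ ≤ t →
    HasDerivAt H (-(1/2) * (γ * ρm t + (4/3) * ρr t + (y t)^2)) t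
  hasDerivAt_ρm : ∀ t, t₀ ≤ t →
    HasDerivAt ρm (-3*γ*H t*ρm t - (1/2)*(4-3*γ)*ρm t*y t*q (φ t)) t
  hasDerivAt_ρr : ∀ t, t₀ ≤ t → HasDerivAt ρr (-4*H t*ρr t) t
  hasDerivAt_y : ∀ t, t₀ ≤ t →
    HasDerivAt y (-3*H t*y t - deriv V (φ t) + (1/2)*(4-3*γ)*ρm t*q (φ t)) t
  hasDerivAt_φ : ∀ t, t₀ ≤ t → HasDerivAt φ (y t) t
  constraint : ∀ t, t₀ ≤ t → 3*(H t)^2 = (1/2)*(y t)^2 + V (φ t) + ρm t + ρr t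
  ρm_nonneg : ∀ t, t₀ ≤ t → 0 ≤ ρm t
  ρr_nonneg : ∀ t, t₀ ≤ t → 0 ≤ ρr t

namespace IsSolution

variable {V q : ℝ → ℝ} {γ t₀ : ℝ} {H ρm ρr y φ : ℝ → ℝ}

theorem hubble_pos (s : IsSolution V q γ t₀ H ρm ρr y φ) (hV : ∀ x, 0 < V x)
    (hH₀ : 0 < H t₀) : ∀ t ∈ Ici t₀, 0 < H t := by
  refine fun t ht => isPreconnected_Ici.lt_of_ne
    (fun t ht => (s.hasDerivAt_H t ht).continuousAt.continuousWithinAt)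
    (fun t ht hzero => ?_) ⟨t₀, self_mem_Ici, hH₀⟩ ht
  have := s.constraint t ht
  rw [hzero] at this
  nlinarith [hV (φ t), s.ρm_nonneg t ht, s.ρr_nonneg t ht, sq_nonneg (y t)]

theorem hubble_antitoneOn (s : IsSolution V q γ t₀ H ρm ρr y φ) (hγ : 0 < γ) :
    AntitoneOn H (Ici t₀) := by
  refine antitoneOn_of_hasDerivWithinAt_nonpos (convex_Ici t₀)
    (fun t ht => (s.hasDerivAt_H t ht).continuousAt.continuousWithinAt)
    (fun t ht => (s.hasDerivAt_H t (interior_subset ht)).hasDerivWithinAt) fun t ht => ?_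
  have ht := interior_subset ht
  nlinarith [s.ρm_nonneg t ht, s.ρr_nonneg t ht, sq_nonneg (y t)]

theorem energy_le (s : IsSolution V q γ t₀ H ρm ρr y φ) (hγ : 0 < γ) (hV : ∀ x, 0 < V x)
    (hH₀ : 0 < H t₀) :
    ∀ t ∈ Ici t₀, (1/2)*(y t)^2 + V (φ t) + ρm t + ρr t ≤ 3 * H t₀ ^ 2 := by
  intro t ht
  have hpos := s.hubble_pos hV hH₀ t ht
  have hle := s.hubble_antitoneOn hγ self_mem_Ici ht ht
  rw [← s.constraint t ht]
  nlinarith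

theorem exists_tendsto_hubble (s : IsSolution V q γ t₀ H ρm ρr y φ) (hγ : 0 < γ)
    (hV : ∀ x, 0 < V x) (hH₀ : 0 < H t₀) : ∃ L, Tendsto H atTop (𝓝 L) :=
  (s.hubble_antitoneOn hγ).exists_tendsto_atTop_s6 fun t ht => (s.hubble_pos hV hH₀ t ht).le

theorem integrableOn_source (s : IsSolution V q γ t₀ H ρm ρr y φ) (hγ : 0 < γ) {L : ℝ}
    (hL : Tendsto H atTop (𝓝 L)) :
    IntegrableOn (fun t => γ * ρm t + (4/3) * ρr t + (y t)^2) (Ioi t₀) := by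
  refine (integrable_const_mul_iff (by norm_num : IsUnit (-(1/2 : ℝ))) _).1
    (integrableOn_Ioi_deriv_of_nonpos' s.hasDerivAt_H (fun t ht => ?_) hL)
  have ht : t₀ ≤ t := le_of_lt ht
  nlinarith [s.ρm_nonneg t ht, s.ρr_nonneg t ht, sq_nonneg (y t)]

theorem hasDerivAt_matter_add_kinetic (s : IsSolution V q γ t₀ H ρm ρr y φ) :
    ∀ t ∈ Ici t₀, HasDerivAt (fun t => ρm t + (1/2)*(y t)^2)
      (-3*γ*H t*ρm t - 3*H t*(y t)^2 - deriv V (φ t) * y t) t := fun t ht => by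
  refine ((s.hasDerivAt_ρm t ht).add
    (((s.hasDerivAt_y t ht).pow 2).const_mul (1/2))).congr_deriv ?_
  ring

theorem tendsto_matter_add_kinetic (s : IsSolution V q γ t₀ H ρm ρr y φ) (hγ : 0 < γ)
    (hV : ∀ x, 0 < V x) (hV' : ∀ B, ∃ B', ∀ x, V x ≤ B → |deriv V x| ≤ B')
    (hH₀ : 0 < H t₀) {L : ℝ} (hL : Tendsto H atTop (𝓝 L)) :
    Tendsto (fun t => ρm t + (1/2)*(y t)^2) atTop (𝓝 0) := by
  set B := 3 * H t₀ ^ 2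
  obtain ⟨B', hB'⟩ := hV' B
  refine tendsto_zero_of_integrableOn_of_hasDerivAt_ge
    (M := 3*γ*H t₀*B + 6*H t₀*B + (B'^2 + 2*B)/2)
    s.hasDerivAt_matter_add_kinetic (fun t ht => ?_)
    (fun t ht => by nlinarith [s.ρm_nonneg t ht, sq_nonneg (y t)]) ?_
  · have hE : (1/2)*(y t)^2 + V (φ t) + ρm t + ρr t ≤ B := s.energy_le hγ hV hH₀ t ht
    have hm := s.ρm_nonneg t ht
    have hmB : ρm t ≤ B := by linarith [sq_nonneg (y t), hV (φ t), s.ρr_nonneg t ht]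
    have hyB : (y t)^2 ≤ 2 * B := by linarith [hV (φ t), s.ρr_nonneg t ht]
    have hVB : V (φ t) ≤ B := by linarith [sq_nonneg (y t), s.ρr_nonneg t ht]
    have hHle := s.hubble_antitoneOn hγ self_mem_Ici ht ht
    have hHm : γ * (H t * ρm t) ≤ γ * (H t₀ * B) :=
      mul_le_mul_of_nonneg_left (mul_le_mul hHle hmB hm hH₀.le) hγ.le
    have hHy : H t * (y t)^2 ≤ H t₀ * (2 * B) := mul_le_mul hHle hyB (sq_nonneg _) hH₀.le
    have hV'B : (deriv V (φ t))^2 ≤ B'^2 := by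
      rw [← sq_abs]
      exact pow_le_pow_left₀ (abs_nonneg _) (hB' _ hVB) 2
    nlinarith [sq_nonneg (deriv V (φ t) - y t)]
  · refine integrableOn_Ioi_of_continuousOn_of_abs_le (c := γ⁻¹ + 1)
      (s.integrableOn_source hγ hL)
      (fun t ht => (s.hasDerivAt_matter_add_kinetic t ht).continuousAt.continuousWithinAt)
      fun t ht => ?_
    have ht : t₀ ≤ t := le_of_lt ht
    have hm := s.ρm_nonneg t ht
    have hγm : γ⁻¹ * (γ * ρm t) = ρm t := inv_mul_cancel_left₀ hγ.ne' _
    rw [abs_of_nonneg (by positivity)]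
    nlinarith [sq_nonneg (y t), inv_pos.2 hγ, s.ρr_nonneg t ht]

theorem tendsto_matter_and_velocity (s : IsSolution V q γ t₀ H ρm ρr y φ) (hγ : 0 < γ)
    (hV : ∀ x, 0 < V x) (hV' : ∀ B, ∃ B', ∀ x, V x ≤ B → |deriv V x| ≤ B')
    (hH₀ : 0 < H t₀) {L : ℝ} (hL : Tendsto H atTop (𝓝 L)) :
    Tendsto ρm atTop (𝓝 0) ∧ Tendsto y atTop (𝓝 0) := by
  have hQ := s.tendsto_matter_add_kinetic hγ hV hV' hH₀ hL
  have hev : ∀ᶠ t in atTop, t₀ ≤ t := eventually_ge_atTop t₀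
  refine ⟨tendsto_of_tendsto_of_tendsto_of_le_of_le' tendsto_const_nhds hQ
    (hev.mono s.ρm_nonneg) (hev.mono fun t _ => by nlinarith [sq_nonneg (y t)]), ?_⟩
  have hy2 : Tendsto (fun t => y t ^ 2) atTop (𝓝 0) :=
    tendsto_of_tendsto_of_tendsto_of_le_of_le' tendsto_const_nhds
      (by simpa using hQ.const_mul 2) (Eventually.of_forall fun t => sq_nonneg _)
      (hev.mono fun t ht => by nlinarith [s.ρm_nonneg t ht])
  have := (Real.continuous_sqrt.tendsto 0).comp hy2
  simp only [Function.comp_def, Real.sqrt_sq_eq_abs, Real.sqrt_zero] at this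
  exact (tendsto_zero_iff_abs_tendsto_zero y).2 this

theorem tendsto_radiation (s : IsSolution V q γ t₀ H ρm ρr y φ) (hγ : 0 < γ)
    (hV : ∀ x, 0 < V x) (hH₀ : 0 < H t₀) {L : ℝ} (hL : Tendsto H atTop (𝓝 L)) :
    Tendsto ρr atTop (𝓝 0) := by
  refine tendsto_zero_of_integrableOn_of_hasDerivAt_ge (M := 4 * H t₀ * (3 * H t₀ ^ 2))
    s.hasDerivAt_ρr (fun t ht => ?_) s.ρr_nonneg ?_
  · have hE := s.energy_le hγ hV hH₀ t ht
    have hHle := s.hubble_antitoneOn hγ self_mem_Ici ht ht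
    have := mul_le_mul hHle (by nlinarith [hV (φ t), s.ρm_nonneg t ht, sq_nonneg (y t)] :
      ρr t ≤ 3 * H t₀ ^ 2) (s.ρr_nonneg t ht) hH₀.le
    linarith
  · refine integrableOn_Ioi_of_continuousOn_of_abs_le (c := 3/4) (s.integrableOn_source hγ hL)
      (fun t ht => (s.hasDerivAt_ρr t ht).continuousAt.continuousWithinAt) fun t ht => ?_
    have ht : t₀ ≤ t := le_of_lt ht
    rw [abs_of_nonneg (s.ρr_nonneg t ht)]
    nlinarith [sq_nonneg (y t), s.ρm_nonneg t ht]

theorem tendsto_potential (s : IsSolution V q γ t₀ H ρm ρr y φ) {L : ℝ}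
    (hL : Tendsto H atTop (𝓝 L)) (hy : Tendsto y atTop (𝓝 0)) (hρm : Tendsto ρm atTop (𝓝 0))
    (hρr : Tendsto ρr atTop (𝓝 0)) : Tendsto (fun t => V (φ t)) atTop (𝓝 (3 * L ^ 2)) := by
  have := ((((hL.pow 2).const_mul 3).sub ((hy.pow 2).const_mul (1/2))).sub hρm).sub hρr
  simp only [ne_eq, OfNat.ofNat_ne_zero, not_false_eq_true, zero_pow, mul_zero, sub_zero] at this
  refine this.congr' ?_
  filter_upwards [eventually_ge_atTop t₀] with t ht
  linarith [s.constraint t ht]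

theorem not_tendsto_field_nhds (s : IsSolution V q γ t₀ H ρm ρr y φ)
    (hV' : Continuous (deriv V)) {p : ℝ} (hV'p : deriv V p < 0) (hq : Continuous q) {L : ℝ}
    (hL : Tendsto H atTop (𝓝 L)) (hy : Tendsto y atTop (𝓝 0)) (hρm : Tendsto ρm atTop (𝓝 0)) :
    ¬ Tendsto φ atTop (𝓝 p) := by
  intro hφ
  have hacc : Tendsto (fun t => -3*H t*y t - deriv V (φ t) + (1/2)*(4-3*γ)*ρm t*q (φ t))
      atTop (𝓝 (-deriv V p)) := by
    have := (((hL.const_mul (-3)).mul hy).sub ((hV'.tendsto p).comp hφ)).add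
      ((hρm.const_mul ((1/2)*(4-3*γ))).mul ((hq.tendsto p).comp hφ))
    simpa using this
  obtain ⟨T, hT⟩ := eventually_atTop.1 <|
    (hacc.eventually_const_lt (half_lt_self (neg_pos.2 hV'p))).and (eventually_ge_atTop t₀)
  have hy_top := tendsto_atTop_of_hasDerivAt_ge (a := T) (half_pos (neg_pos.2 hV'p))
    (fun t ht => s.hasDerivAt_y t (hT t ht).2) fun t ht => (hT t ht).1.le
  exact not_tendsto_nhds_of_tendsto_atTop hy_top 0 hy

theorem tendsto_field_atTop (s : IsSolution V q γ t₀ H ρm ρr y φ) (hVbot : Tendsto V atBot atTop)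
    (hV' : Continuous (deriv V)) (hV'neg : ∀ x, deriv V x < 0) (hq : Continuous q) {L : ℝ}
    (hL : Tendsto H atTop (𝓝 L)) (hy : Tendsto y atTop (𝓝 0)) (hρm : Tendsto ρm atTop (𝓝 0))
    (hρr : Tendsto ρr atTop (𝓝 0)) : Tendsto φ atTop atTop := by
  have hVanti : StrictAnti V := strictAnti_of_deriv_neg hV'neg
  have hVφ := s.tendsto_potential hL hy hρm hρr
  by_cases hv : ∀ x, 3 * L ^ 2 < V x
  · exact hVanti.tendsto_atTop_of_tendsto_comp hVφ hv
  obtain ⟨M, hM⟩ := not_forall.1 hv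
  have hVcont : Continuous V := continuous_iff_continuousAt.2 fun x =>
    (differentiableAt_of_deriv_ne_zero (hV'neg x).ne).continuousAt
  obtain ⟨p, -, hp⟩ := intermediate_value_Iic' hVcont.continuousOn hVbot (not_lt.1 hM)
  rw [← hp] at hVφ
  exact absurd (hVanti.tendsto_nhds_of_tendsto_comp hVφ)
    (s.not_tendsto_field_nhds hV' (hV'neg p) hq hL hy hρm)

end IsSolution

end ScalarTensor

theorem stmt6_general (H ρm ρr y φ V χ : ℝ → ℝ) (γ t₀ : ℝ)
    (hγ0 : 0 < γ)
    (hχpos : ∀ s, 0 < χ s)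
    (hχC2 : ContDiff ℝ 2 χ)
    (hVnn : ∀ s, 0 ≤ V s)
    (hVinf : Tendsto V atBot atTop)
    (hV'cont : Continuous (deriv V))
    (hV'neg : ∀ s, deriv V s < 0)
    (hV'bdd : ∀ A : Set ℝ, (∃ B, ∀ s ∈ A, V s ≤ B) → ∃ B', ∀ s ∈ A, |deriv V s| ≤ B')
    (hH : ∀ t, t₀ ≤ t →
      HasDerivAt H (-(1/2) * (γ * ρm t + (4/3) * ρr t + (y t)^2)) t)
    (hm : ∀ t, t₀ ≤ t →
      HasDerivAt ρm (-3*γ*H t*ρm t - (1/2)*(4-3*γ)*ρm t*y t*(deriv χ (φ t) / χ (φ t))) t)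
    (hr : ∀ t, t₀ ≤ t → HasDerivAt ρr (-4*H t*ρr t) t)
    (hy : ∀ t, t₀ ≤ t →
      HasDerivAt y (-3*H t*y t - deriv V (φ t) + (1/2)*(4-3*γ)*ρm t*(deriv χ (φ t) / χ (φ t))) t)
    (hφ : ∀ t, t₀ ≤ t → HasDerivAt φ (y t) t)
    (hconstraint : ∀ t, t₀ ≤ t →
      3*(H t)^2 = (1/2)*(y t)^2 + V (φ t) + ρm t + ρr t)
    (hmnn : ∀ t, t₀ ≤ t → 0 ≤ ρm t)
    (hrnn : ∀ t, t₀ ≤ t → 0 ≤ ρr t)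
    (hH0 : 0 < H t₀) :
    (Tendsto ρm atTop (nhds 0) ∧ Tendsto ρr atTop (nhds 0) ∧
      Tendsto y atTop (nhds 0)) ∧ Tendsto φ atTop atTop := by
  have hsol : ScalarTensor.IsSolution V (fun x => deriv χ x / χ x) γ t₀ H ρm ρr y φ :=
    ⟨hH, hm, hr, hy, hφ, hconstraint, hmnn, hrnn⟩
  have hq : Continuous fun x => deriv χ x / χ x :=
    (hχC2.continuous_deriv one_le_two).div hχC2.continuous fun x => (hχpos x).ne'
  have hVpos : ∀ x, 0 < V x := fun x =>
    (hVnn (x + 1)).trans_lt (strictAnti_of_deriv_neg hV'neg (lt_add_one x))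
  have hV'bdd' : ∀ B, ∃ B', ∀ x, V x ≤ B → |deriv V x| ≤ B' := fun B =>
    hV'bdd {x | V x ≤ B} ⟨B, fun _ hx => hx⟩
  obtain ⟨L, hL⟩ := hsol.exists_tendsto_hubble hγ0 hVpos hH0
  obtain ⟨hρm, hy0⟩ := hsol.tendsto_matter_and_velocity hγ0 hVpos hV'bdd' hH0 hL
  have hρr := hsol.tendsto_radiation hγ0 hVpos hH0 hL
  exact ⟨⟨hρm, hρr, hy0⟩, hsol.tendsto_field_atTop hVinf hV'cont hV'neg hq hL hy0 hρm hρr⟩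

/-- Proposition 3: if `χ'/χ ≤ 2K/((2−γ)(4−3γ))` for some `K ≠ 0`, `V ≥ 0`,
`V(φ) → +∞` as `φ → −∞`, `V'` is continuous and negative everywhere, and `V'`
is bounded on every set where `V` is bounded, then along any solution with
`H(t₀) > 0`, `ρ_m(t₀) > 0`, `ρ_r(t₀) > 0`, one has `(ρ_m, ρ_r, y) → (0,0,0)`
and `φ(t) → +∞` as `t → ∞`. -/
theorem stmt6 (H ρm ρr y φ V χ : ℝ → ℝ) (γ t₀ K : ℝ)
    (hγ0 : 0 < γ) (hγ2 : γ < 2) (hγ43 : γ ≠ 4/3)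
    (hχpos : ∀ s, 0 < χ s)
    (hVC2 : ContDiff ℝ 2 V) (hχC2 : ContDiff ℝ 2 χ)
    (hVnn : ∀ s, 0 ≤ V s)
    (hVinf : Tendsto V atBot atTop)
    (hV'cont : Continuous (deriv V))
    (hV'neg : ∀ s, deriv V s < 0)
    (hV'bdd : ∀ A : Set ℝ, (∃ B, ∀ s ∈ A, V s ≤ B) → ∃ B', ∀ s ∈ A, |deriv V s| ≤ B')
    (hK : K ≠ 0)
    (hχbd : ∀ s, deriv χ s / χ s ≤ 2*K / ((2-γ)*(4-3*γ)))
    (hH : ∀ t, t₀ ≤ t →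
      HasDerivAt H (-(1/2) * (γ * ρm t + (4/3) * ρr t + (y t)^2)) t)
    (hm : ∀ t, t₀ ≤ t →
      HasDerivAt ρm (-3*γ*H t*ρm t - (1/2)*(4-3*γ)*ρm t*y t*(deriv χ (φ t) / χ (φ t))) t)
    (hr : ∀ t, t₀ ≤ t → HasDerivAt ρr (-4*H t*ρr t) t)
    (hy : ∀ t, t₀ ≤ t →
      HasDerivAt y (-3*H t*y t - deriv V (φ t) + (1/2)*(4-3*γ)*ρm t*(deriv χ (φ t) / χ (φ t))) t)
    (hφ : ∀ t, t₀ ≤ t → HasDerivAt φ (y t) t)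
    (hconstraint : ∀ t, t₀ ≤ t →
      3*(H t)^2 = (1/2)*(y t)^2 + V (φ t) + ρm t + ρr t)
    (hmnn : ∀ t, t₀ ≤ t → 0 ≤ ρm t)
    (hrnn : ∀ t, t₀ ≤ t → 0 ≤ ρr t)
    (hH0 : 0 < H t₀) (hm0 : 0 < ρm t₀) (hr0 : 0 < ρr t₀) :
    (Tendsto ρm atTop (nhds 0) ∧ Tendsto ρr atTop (nhds 0) ∧
      Tendsto y atTop (nhds 0)) ∧ Tendsto φ atTop atTop :=
  stmt6_general H ρm ρr y φ V χ γ t₀ hγ0 hχpos hχC2 hVnn hVinf hV'cont hV'neg hV'bdd hH hm hr hy hφ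
    hconstraint hmnn hrnn hH0
end

section
/- The Albrecht–Skordis potential V(φ) = e^{−μφ}(A + (φ − B)²) with A > 0 is WBI of exponential order N = −μ: with the coordinate φ̄ = φ^{−1/2}, the function W̄_V(φ̄) = −2φ̄²(Bφ̄² − 1)/(Aφ̄⁴ + (Bφ̄² − 1)²) extends continuously to φ̄ = 0 with value 0 and vanishing derivative at 0. -/
/-!
In the coordinate `φ = φ̄⁻²` the logarithmic derivative `V'/V = -μ + 2(φ - B)/(A + (φ - B)²)`
becomes the rational function `W̄` of `φ̄²`, whose denominator `Aφ̄⁴ + (Bφ̄² - 1)²` is positive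
because `A > 0`. A differentiable function of `φ̄²` has derivative `2φ̄ · (…) = 0` at `φ̄ = 0`.
-/

lemma deriv_exp_mul_div_add {μ φ : ℝ} {p : ℝ → ℝ} (hp : DifferentiableAt ℝ p φ) (hpφ : p φ ≠ 0) :
    deriv (fun t => Real.exp (-μ * t) * p t) φ / (Real.exp (-μ * φ) * p φ) + μ =
      deriv p φ / p φ := by
  have hexp : HasDerivAt (fun t => Real.exp (-μ * t)) (Real.exp (-μ * φ) * -μ) φ := by
    simpa using ((hasDerivAt_id φ).const_mul (-μ)).exp
  rw [deriv_fun_mul hexp.differentiableAt hp, hexp.deriv]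
  field_simp
  ring

lemma hasDerivAt_comp_sq_zero {F : ℝ → ℝ} (hF : DifferentiableAt ℝ F 0) :
    HasDerivAt (fun x => F (x ^ 2)) 0 0 := by
  simpa [Function.comp_def] using hF.hasDerivAt.comp_of_eq (0 : ℝ) (hasDerivAt_pow 2 0) (by simp)

/-- For the Albrecht–Skordis potential `V(φ) = e^{−μφ}(A + (φ − B)²)` with `A > 0`,
under the coordinate `φ̄ = φ^{−1/2}` (i.e. `φ = φ̄⁻²`), the function
`W̄_V(φ̄) = −2φ̄²(Bφ̄² − 1)/(Aφ̄⁴ + (Bφ̄² − 1)²)` coincides with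
`V'(φ)/V(φ) + μ` for `φ̄ > 0`, takes the value `0` at `φ̄ = 0`, is continuous at `0`,
and has vanishing derivative at `0`; i.e. `V` is WBI of exponential order `N = −μ`. -/
theorem stmt11 (μ A B : ℝ) (hA : 0 < A) :
    let V : ℝ → ℝ := fun φ => Real.exp (-μ * φ) * (A + (φ - B)^2)
    let Wbar : ℝ → ℝ := fun x =>
      -2 * x^2 * (B * x^2 - 1) / (A * x^4 + (B * x^2 - 1)^2)
    (∀ x : ℝ, 0 < x → Wbar x = deriv V (x^2)⁻¹ / V (x^2)⁻¹ + μ) ∧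
    Wbar 0 = 0 ∧ ContinuousAt Wbar 0 ∧ HasDerivAt Wbar 0 0 := by
  intro V Wbar
  have hWbar_deriv : HasDerivAt Wbar 0 0 := by
    let F : ℝ → ℝ := fun t => -2 * t * (B * t - 1) / (A * t ^ 2 + (B * t - 1) ^ 2)
    have hF : DifferentiableAt ℝ F 0 := .div (by fun_prop) (by fun_prop) (by simp)
    have hWbar : Wbar = fun x => F (x ^ 2) := by
      funext x
      simp only [Wbar, F, ← pow_mul]
    exact hWbar ▸ hasDerivAt_comp_sq_zero hF
  refine ⟨fun x hx => ?_, by simp [Wbar], hWbar_deriv.continuousAt, hWbar_deriv⟩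
  have hquad : HasDerivAt (fun φ => A + (φ - B) ^ 2) (2 * ((x ^ 2)⁻¹ - B)) (x ^ 2)⁻¹ := by
    simpa using ((hasDerivAt_id _).sub_const B).pow 2 |>.const_add A
  rw [deriv_exp_mul_div_add hquad.differentiableAt (by positivity), hquad.deriv]
  have : A * x ^ 4 + (B * x ^ 2 - 1) ^ 2 ≠ 0 := by positivity
  simp only [Wbar]
  field_simp
  ring
end

section
/- In the reduced 4-dimensional system at infinity with φ̄ = 0, the points P₁ = (σ₂,σ₄,σ₅) = (−1,0,0) and P₂ = (1,0,0) are equilibria, and the nonzero eigenvalues of the linearization of the reduced (σ₂,σ₄,σ₅)-system at P₂ are 1/3, 1 + N/√6, and 2 − γ + M(3γ−4)/√6; P₂ is a hyperbolic source of the restricted flow iff N > −√6 and M(3γ−4)/√6 > γ − 2. -/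
open Filter Set Topology

private lemma hfd_pow2 {E : Type*} [NormedAddCommGroup E] [NormedSpace ℝ E]
    {f : E → ℝ} {f' : E →L[ℝ] ℝ} {x : E} (h : HasFDerivAt f f' x) :
    HasFDerivAt (fun y => f y ^ 2) ((2 * f x) • f') x := by
  have h2 := h.mul h
  have hfun : (fun y => f y ^ 2) = fun y => f y * f y := by ext y; ring
  rw [hfun]
  have hc : (2 * f x) • f' = f x • f' + f x • f' := by rw [two_mul, add_smul]
  rw [hc]
  exact h2

private lemma hfd_pow3 {E : Type*} [NormedAddCommGroup E] [NormedSpace ℝ E]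
    {f : E → ℝ} {f' : E →L[ℝ] ℝ} {x : E} (h : HasFDerivAt f f' x) :
    HasFDerivAt (fun y => f y ^ 3) ((3 * f x ^ 2) • f') x := by
  have h3 := (hfd_pow2 h).mul h
  have hfun : (fun y => f y ^ 3) = fun y => f y ^ 2 * f y := by ext y; ring
  rw [hfun]
  have hc : (3 * f x ^ 2) • f' = f x ^ 2 • f' + f x • (2 * f x) • f' := by
    rw [smul_smul, ← add_smul]
    congr 1
    ring
  rw [hc]
  exact h3


private lemma hfd_div_const {E : Type*} [NormedAddCommGroup E] [NormedSpace ℝ E]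
    {f : E → ℝ} {f' : E →L[ℝ] ℝ} {x : E} (h : HasFDerivAt f f' x) (c : ℝ) :
    HasFDerivAt (fun y => f y / c) (c⁻¹ • f') x := by
  have hfun : (fun y => f y / c) = fun y => c⁻¹ * f y := by ext y; rw [div_eq_inv_mul]
  rw [hfun]
  exact h.const_mul c⁻¹

/-- In the reduced system at scalar-field infinity (`φ̄ = 0`), the points
`P₁ = (−1,0,0)` and `P₂ = (1,0,0)` are equilibria; the nonzero eigenvalues of the
linearization at `P₂` are `1/3`, `1 + N/√6` and `2 − γ + M(3γ−4)/√6`, and they are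
all positive (hyperbolic source) iff `N > −√6` and `M(3γ−4)/√6 > γ − 2`. -/
theorem stmt14 (γ M N : ℝ) (hγ0 : 0 < γ) (hγ2 : γ < 2) (hγ43 : γ ≠ 4/3) :
    let F : ℝ × ℝ × ℝ → ℝ × ℝ × ℝ := fun p =>
      (p.1^3 + ((2 * p.2.2^2)/3 - 1) * p.1 - N * p.2.1^2 / Real.sqrt 6
          + (M * (4 - 3*γ) / (2 * Real.sqrt 6) + γ * p.1 / 2)
              * (1 - p.1^2 - p.2.1^2 - p.2.2^2),
       (1/6) * p.2.1 * (Real.sqrt 6 * N * p.1 + 3*(2-γ)*p.1^2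
          + 3*γ*(1 - p.2.1^2) + (4 - 3*γ) * p.2.2^2),
       (1/6) * p.2.2 * (3*(2-γ)*p.1^2 - 3*γ*p.2.1^2 - (4 - 3*γ)*(1 - p.2.2^2)))
    F (-1, 0, 0) = 0 ∧ F (1, 0, 0) = 0 ∧
    (Module.End.HasEigenvalue
        ((fderiv ℝ F (1, 0, 0)) : ℝ × ℝ × ℝ →ₗ[ℝ] ℝ × ℝ × ℝ) (1/3) ∧
      Module.End.HasEigenvalue
        ((fderiv ℝ F (1, 0, 0)) : ℝ × ℝ × ℝ →ₗ[ℝ] ℝ × ℝ × ℝ) (1 + N / Real.sqrt 6) ∧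
      Module.End.HasEigenvalue
        ((fderiv ℝ F (1, 0, 0)) : ℝ × ℝ × ℝ →ₗ[ℝ] ℝ × ℝ × ℝ)
          (2 - γ + M * (3*γ - 4) / Real.sqrt 6)) ∧
    ((0 < (1:ℝ)/3 ∧ 0 < 1 + N / Real.sqrt 6 ∧
        0 < 2 - γ + M * (3*γ - 4) / Real.sqrt 6) ↔
      (N > -Real.sqrt 6 ∧ M * (3*γ - 4) / Real.sqrt 6 > γ - 2)) := by
  intro F
  have hs : (0:ℝ) < Real.sqrt 6 := Real.sqrt_pos.mpr (by norm_num)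
  have hs' : Real.sqrt 6 ≠ 0 := ne_of_gt hs
  -- the derivative at (1,0,0)
  set e : ℝ × ℝ × ℝ := (1, 0, 0) with he
  have hx : HasFDerivAt (fun p : ℝ × ℝ × ℝ => p.1) (ContinuousLinearMap.fst ℝ ℝ (ℝ × ℝ)) e :=
    hasFDerivAt_fst
  have hy : HasFDerivAt (fun p : ℝ × ℝ × ℝ => p.2.1)
      ((ContinuousLinearMap.fst ℝ ℝ ℝ).comp (ContinuousLinearMap.snd ℝ ℝ (ℝ × ℝ))) e :=
    hasFDerivAt_snd.fst
  have hz : HasFDerivAt (fun p : ℝ × ℝ × ℝ => p.2.2)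
      ((ContinuousLinearMap.snd ℝ ℝ ℝ).comp (ContinuousLinearMap.snd ℝ ℝ (ℝ × ℝ))) e :=
    hasFDerivAt_snd.snd
  have h1 := (((hfd_pow3 hx).add (((hfd_div_const ((hfd_pow2 hz).const_mul 2) 3).sub_const 1).mul hx)).sub
      (hfd_div_const ((hfd_pow2 hy).const_mul N) (Real.sqrt 6))).add
      (((hfd_div_const (hx.const_mul γ) 2).const_add (M * (4 - 3*γ) / (2 * Real.sqrt 6))).mul
        ((((hfd_pow2 hx).const_sub 1).sub (hfd_pow2 hy)).sub (hfd_pow2 hz)))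
  have h2 := (hy.const_mul (1/6 : ℝ)).mul
      ((((hx.const_mul (Real.sqrt 6 * N)).add ((hfd_pow2 hx).const_mul (3*(2-γ)))).add
        (((hfd_pow2 hy).const_sub 1).const_mul (3*γ))).add ((hfd_pow2 hz).const_mul (4-3*γ)))
  have h3 := (hz.const_mul (1/6 : ℝ)).mul
      ((((hfd_pow2 hx).const_mul (3*(2-γ))).sub ((hfd_pow2 hy).const_mul (3*γ))).sub
        (((hfd_pow2 hz).const_sub 1).const_mul (4-3*γ)))
  have hF : HasFDerivAt F _ e := h1.prodMk (h2.prodMk h3)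
  have hfd := hF.fderiv
  have h6 : Real.sqrt 6 * Real.sqrt 6 = 6 := Real.mul_self_sqrt (by norm_num)
  have hinv : (Real.sqrt 6)⁻¹ = Real.sqrt 6 * (6:ℝ)⁻¹ := by
    field_simp
    rw [Real.sq_sqrt (by norm_num)]
  refine ⟨?_, ?_, ⟨?_, ?_, ?_⟩, ?_⟩
  · show (_, _, _) = (0 : ℝ × ℝ × ℝ)
    simp only [Prod.mk_eq_zero]
    norm_num
  · show (_, _, _) = (0 : ℝ × ℝ × ℝ)
    simp only [Prod.mk_eq_zero]
    norm_num
  · refine Module.End.hasEigenvalue_of_hasEigenvector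
      (x := ((0:ℝ), (0:ℝ), (1:ℝ))) ⟨Module.End.mem_eigenspace_iff.mpr ?_, by simp [Prod.ext_iff]⟩
    show (fderiv ℝ F e) ((0:ℝ), (0:ℝ), (1:ℝ)) = _
    rw [hfd]
    simp only [he, ContinuousLinearMap.prod_apply, ContinuousLinearMap.add_apply,
      ContinuousLinearMap.sub_apply, ContinuousLinearMap.neg_apply,
      ContinuousLinearMap.smul_apply, ContinuousLinearMap.coe_comp',
      Function.comp_apply, ContinuousLinearMap.coe_fst', ContinuousLinearMap.coe_snd',
      Prod.smul_mk, smul_eq_mul, Prod.mk.injEq]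
    refine ⟨?_, ?_, ?_⟩ <;>
    · simp only [div_eq_mul_inv, mul_inv, hinv, Pi.add_apply, Pi.sub_apply]
      ring
  · refine Module.End.hasEigenvalue_of_hasEigenvector
      (x := ((0:ℝ), (1:ℝ), (0:ℝ))) ⟨Module.End.mem_eigenspace_iff.mpr ?_, by simp [Prod.ext_iff]⟩
    show (fderiv ℝ F e) ((0:ℝ), (1:ℝ), (0:ℝ)) = _
    rw [hfd]
    simp only [he, ContinuousLinearMap.prod_apply, ContinuousLinearMap.add_apply,
      ContinuousLinearMap.sub_apply, ContinuousLinearMap.neg_apply,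
      ContinuousLinearMap.smul_apply, ContinuousLinearMap.coe_comp',
      Function.comp_apply, ContinuousLinearMap.coe_fst', ContinuousLinearMap.coe_snd',
      Prod.smul_mk, smul_eq_mul, Prod.mk.injEq]
    refine ⟨?_, ?_, ?_⟩ <;>
    · simp only [div_eq_mul_inv, mul_inv, hinv, Pi.add_apply, Pi.sub_apply]
      ring
  · refine Module.End.hasEigenvalue_of_hasEigenvector
      (x := ((1:ℝ), (0:ℝ), (0:ℝ))) ⟨Module.End.mem_eigenspace_iff.mpr ?_, by simp [Prod.ext_iff]⟩
    show (fderiv ℝ F e) ((1:ℝ), (0:ℝ), (0:ℝ)) = _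
    rw [hfd]
    simp only [he, ContinuousLinearMap.prod_apply, ContinuousLinearMap.add_apply,
      ContinuousLinearMap.sub_apply, ContinuousLinearMap.neg_apply,
      ContinuousLinearMap.smul_apply, ContinuousLinearMap.coe_comp',
      Function.comp_apply, ContinuousLinearMap.coe_fst', ContinuousLinearMap.coe_snd',
      Prod.smul_mk, smul_eq_mul, Prod.mk.injEq]
    refine ⟨?_, ?_, ?_⟩ <;>
    · simp only [div_eq_mul_inv, mul_inv, hinv, Pi.add_apply, Pi.sub_apply]
      ring
  · constructor
    · rintro ⟨-, h2', h3'⟩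
      refine ⟨?_, by linarith⟩
      have hN : (-1:ℝ) < N / Real.sqrt 6 := by linarith
      have := (lt_div_iff₀ hs).mp hN
      linarith
    · rintro ⟨h1', h2'⟩
      refine ⟨by norm_num, ?_, by linarith⟩
      have : (-1:ℝ) * Real.sqrt 6 < N := by linarith
      have := (lt_div_iff₀ hs).mpr this
      linarith
end

section
/- In the reduced system at infinity, the point P₄ = (σ₂, σ₄, σ₅) = (−N/√6, √(1 − N²/6), 0) is an equilibrium whenever N² < 6, and the eigenvalues of the linearization of the reduced (σ₂,σ₄,σ₅)-flow there are (N² − 6)/6, (N² − 4)/6, and (1/3)N(2M + N) − (1/2)(MN + 2)γ. -/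
/-!
At `P₄` we have `σ₅ = 0` and `σ₂² + σ₄² = 1`, so the factor `1 − σ₂² − σ₄² − σ₅²` in `σ₂'` vanishes,
and `σ₂ = −N/√6` also kills the bracket in `σ₄'`: `P₄` is an equilibrium. Since `σ₅` enters the first
two components only through `σ₅²` and the third component is `σ₅` times a function, the linearization
at `P₄` is block diagonal: `(N² − 4)/6` in the `σ₅`-direction and a `2 × 2` block in `(σ₂, σ₄)`, whose
eigenvalues are the roots of its characteristic polynomial.
-/

open Real Module.End

theorem Module.End.hasEigenvalue_of_apply_pair {K V : Type*} [Field K] [AddCommGroup V]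
    [Module K V] {f : Module.End K V} {u w : V} (huw : LinearIndependent K ![u, w])
    {a b c d μ : K} (hu : f u = a • u + b • w) (hw : f w = c • u + d • w)
    (hμ : (μ - a) * (μ - d) = b * c) :
    f.HasEigenvalue μ := by
  have of_apply : ∀ v, f v = μ • v → v ≠ 0 → f.HasEigenvalue μ := fun v hfv hv =>
    hasEigenvalue_of_hasEigenvector ⟨mem_eigenspace_iff.2 hfv, hv⟩
  rw [LinearIndependent.pair_iff] at huw
  -- the columns of the adjugate of `μ - A`, `A = !![a, c; b, d]`, are eigenvectors unless zero
  by_cases h₁ : c • u + (μ - a) • w = 0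
  · obtain ⟨-, ha⟩ := huw _ _ h₁
    by_cases h₂ : (μ - d) • u + b • w = 0
    · obtain ⟨-, hb⟩ := huw _ _ h₂
      refine of_apply u ?_ fun h => by simpa [h] using huw 1 0
      rw [hu, hb, sub_eq_zero.1 ha, zero_smul, add_zero]
    · refine of_apply _ ?_ h₂
      simp only [map_add, map_smul, hu, hw]
      linear_combination (norm := module) -hμ • u
  · refine of_apply _ ?_ h₁
    simp only [map_add, map_smul, hu, hw]
    linear_combination (norm := module) -hμ • w

noncomputable def reducedField (γ M N : ℝ) : ℝ × ℝ × ℝ → ℝ × ℝ × ℝ := fun p =>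
  (p.1 ^ 3 + ((2 * p.2.2 ^ 2) / 3 - 1) * p.1 - N * p.2.1 ^ 2 / √6
      + (M * (4 - 3 * γ) / (2 * √6) + γ * p.1 / 2) * (1 - p.1 ^ 2 - p.2.1 ^ 2 - p.2.2 ^ 2),
    (1 / 6) * p.2.1 * (√6 * N * p.1 + 3 * (2 - γ) * p.1 ^ 2
      + 3 * γ * (1 - p.2.1 ^ 2) + (4 - 3 * γ) * p.2.2 ^ 2),
    (1 / 6) * p.2.2 * (3 * (2 - γ) * p.1 ^ 2 - 3 * γ * p.2.1 ^ 2 - (4 - 3 * γ) * (1 - p.2.2 ^ 2)))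

theorem reducedField_eq_zero {γ M N y : ℝ} (hy : y ^ 2 = 1 - N ^ 2 / 6) :
    reducedField γ M N (-N / √6, y, 0) = 0 := by
  have hs : √6 ^ 2 = 6 := sq_sqrt (by norm_num)
  simp only [reducedField, Prod.mk_eq_zero]
  exact ⟨by grind, by grind, by ring⟩

theorem fderiv_reducedField_apply {γ M N y : ℝ} (hy : y ^ 2 = 1 - N ^ 2 / 6) (a b c : ℝ) :
    fderiv ℝ (reducedField γ M N) (-N / √6, y, 0) (a, b, c) =
      ((N ^ 2 / 2 - 1 + N * (M * (4 - 3 * γ) - γ * N) / 6) * a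
          - y * √6 * (2 * N + M * (4 - 3 * γ) - γ * N) / 6 * b,
        y * √6 * N * (γ - 1) / 6 * a - γ * (1 - N ^ 2 / 6) * b,
        (N ^ 2 - 4) / 6 * c) := by
  have hs : √6 ^ 2 = 6 := sq_sqrt (by norm_num)
  unfold reducedField
  simp (disch := fun_prop) only [div_eq_mul_inv, DifferentiableAt.fderiv_prodMk, fderiv_fun_add,
    fderiv_fun_sub, fderiv_fun_mul, fderiv_fun_pow, fderiv.fst, fderiv.snd, fderiv_const_apply,
    fderiv_fun_id, ContinuousLinearMap.prod_apply, add_apply, sub_apply, smul_apply, zero_apply,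
    ContinuousLinearMap.comp_apply, ContinuousLinearMap.coe_fst', ContinuousLinearMap.coe_snd',
    ContinuousLinearMap.id_apply, smul_eq_mul, nsmul_eq_mul, Prod.mk.injEq]
  exact ⟨by grind, by grind, by grind⟩

theorem stmt15_general (γ M N : ℝ) (hN : N^2 < 6) :
    let F : ℝ × ℝ × ℝ → ℝ × ℝ × ℝ := fun p =>
      (p.1^3 + ((2 * p.2.2^2)/3 - 1) * p.1 - N * p.2.1^2 / Real.sqrt 6
          + (M * (4 - 3*γ) / (2 * Real.sqrt 6) + γ * p.1 / 2)
              * (1 - p.1^2 - p.2.1^2 - p.2.2^2),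
       (1/6) * p.2.1 * (Real.sqrt 6 * N * p.1 + 3*(2-γ)*p.1^2
          + 3*γ*(1 - p.2.1^2) + (4 - 3*γ) * p.2.2^2),
       (1/6) * p.2.2 * (3*(2-γ)*p.1^2 - 3*γ*p.2.1^2 - (4 - 3*γ)*(1 - p.2.2^2)))
    let P₄ : ℝ × ℝ × ℝ := (-N / Real.sqrt 6, Real.sqrt (1 - N^2/6), 0)
    F P₄ = 0 ∧
    Module.End.HasEigenvalue
      ((fderiv ℝ F P₄) : ℝ × ℝ × ℝ →ₗ[ℝ] ℝ × ℝ × ℝ) ((N^2 - 6)/6) ∧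
    Module.End.HasEigenvalue
      ((fderiv ℝ F P₄) : ℝ × ℝ × ℝ →ₗ[ℝ] ℝ × ℝ × ℝ) ((N^2 - 4)/6) ∧
    Module.End.HasEigenvalue
      ((fderiv ℝ F P₄) : ℝ × ℝ × ℝ →ₗ[ℝ] ℝ × ℝ × ℝ)
        ((1/3) * N * (2*M + N) - (1/2) * (M*N + 2) * γ) := by
  intro F P₄
  have hy : √(1 - N ^ 2 / 6) ^ 2 = 1 - N ^ 2 / 6 := sq_sqrt (by linarith)
  have hJ : ∀ a b c, fderiv ℝ F P₄ (a, b, c) = _ := fderiv_reducedField_apply hy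
  set y := √(1 - N ^ 2 / 6)
  have indep : LinearIndependent ℝ ![((1 : ℝ), (0 : ℝ), (0 : ℝ)), (0, 1, 0)] :=
    LinearIndependent.pair_iff.2 fun s t h => by simpa using h
  have he₁ : (fderiv ℝ F P₄ : ℝ × ℝ × ℝ →ₗ[ℝ] ℝ × ℝ × ℝ) (1, 0, 0) =
      (N ^ 2 / 2 - 1 + N * (M * (4 - 3 * γ) - γ * N) / 6) • (1, 0, 0) +
        (y * √6 * N * (γ - 1) / 6) • (0, 1, 0) := by
    simp [hJ]
  have he₂ : (fderiv ℝ F P₄ : ℝ × ℝ × ℝ →ₗ[ℝ] ℝ × ℝ × ℝ) (0, 1, 0) =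
      (-(y * √6 * (2 * N + M * (4 - 3 * γ) - γ * N) / 6)) • (1, 0, 0) +
        (-(γ * (1 - N ^ 2 / 6))) • (0, 1, 0) := by
    simp [hJ]
  refine ⟨reducedField_eq_zero hy, hasEigenvalue_of_apply_pair indep he₁ he₂ (by grind), ?_,
    hasEigenvalue_of_apply_pair indep he₁ he₂ (by grind)⟩
  have he₃ : (fderiv ℝ F P₄ : ℝ × ℝ × ℝ →ₗ[ℝ] ℝ × ℝ × ℝ) (0, 0, 1) =
      ((N ^ 2 - 4) / 6) • (0, 0, 1) := by
    simp [hJ]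
  exact hasEigenvalue_of_hasEigenvector ⟨mem_eigenspace_iff.2 he₃, by simp⟩

/-- In the reduced system at infinity, `P₄ = (−N/√6, √(1 − N²/6), 0)` is an
equilibrium whenever `N² < 6`, and the eigenvalues of the linearization there are
`(N² − 6)/6`, `(N² − 4)/6` and `(1/3)N(2M + N) − (1/2)(MN + 2)γ`. -/
theorem stmt15 (γ M N : ℝ) (hγ0 : 0 < γ) (hγ2 : γ < 2) (hN : N^2 < 6) :
    let F : ℝ × ℝ × ℝ → ℝ × ℝ × ℝ := fun p =>
      (p.1^3 + ((2 * p.2.2^2)/3 - 1) * p.1 - N * p.2.1^2 / Real.sqrt 6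
          + (M * (4 - 3*γ) / (2 * Real.sqrt 6) + γ * p.1 / 2)
              * (1 - p.1^2 - p.2.1^2 - p.2.2^2),
       (1/6) * p.2.1 * (Real.sqrt 6 * N * p.1 + 3*(2-γ)*p.1^2
          + 3*γ*(1 - p.2.1^2) + (4 - 3*γ) * p.2.2^2),
       (1/6) * p.2.2 * (3*(2-γ)*p.1^2 - 3*γ*p.2.1^2 - (4 - 3*γ)*(1 - p.2.2^2)))
    let P₄ : ℝ × ℝ × ℝ := (-N / Real.sqrt 6, Real.sqrt (1 - N^2/6), 0)
    F P₄ = 0 ∧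
    Module.End.HasEigenvalue
      ((fderiv ℝ F P₄) : ℝ × ℝ × ℝ →ₗ[ℝ] ℝ × ℝ × ℝ) ((N^2 - 6)/6) ∧
    Module.End.HasEigenvalue
      ((fderiv ℝ F P₄) : ℝ × ℝ × ℝ →ₗ[ℝ] ℝ × ℝ × ℝ) ((N^2 - 4)/6) ∧
    Module.End.HasEigenvalue
      ((fderiv ℝ F P₄) : ℝ × ℝ × ℝ →ₗ[ℝ] ℝ × ℝ × ℝ)
        ((1/3) * N * (2*M + N) - (1/2) * (M*N + 2) * γ) :=
  stmt15_general γ M N hN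
end

section
/- For the reduced system at infinity, the equilibrium P₃ = (σ₂, σ₄, σ₅) = (M(3γ−4)/(√6(γ−2)), 0, 0) lies in the closed unit ball iff M²(3γ−4)² ≤ 6(γ−2)², and at P₃ the deceleration parameter equals q = (−M²(4−3γ)² + 2γ(3γ−8) + 8)/(4(γ−2)); in particular q < 0 iff 0 < γ < 2/3 and M² < (2γ(3γ−8)+8)/(4−3γ)². -/
/-! At `P₃` only `σ₂` is nonzero, and `σ₂² = M²(3γ−4)²/(6(γ−2)²)`, so the ball condition and
the value of `q` are direct computations. The numerator of `q(P₃)` has constant part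
`2γ(3γ−8) + 8 = 2(3γ−2)(γ−2)`; since the denominator `4(γ−2)` is negative, `q(P₃) < 0` forces
this constant part to exceed `M²(4−3γ)² ≥ 0`, i.e. `γ < 2/3`, after which `(4−3γ)² > 0` may be
divided out. -/

lemma sq_div_sqrt_six_mul (a b : ℝ) : (a / (Real.sqrt 6 * b)) ^ 2 = a ^ 2 / (6 * b ^ 2) := by
  rw [div_pow, mul_pow, Real.sq_sqrt (by norm_num)]

lemma decel_numerator_pos_iff {γ M : ℝ} (hγ2 : γ < 2) :
    0 < -M^2 * (4 - 3*γ)^2 + 2*γ*(3*γ - 8) + 8 ↔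
      γ < 2/3 ∧ M^2 < (2*γ*(3*γ - 8) + 8) / (4 - 3*γ)^2 := by
  have hfactor : 2*γ*(3*γ - 8) + 8 = 2 * (3*γ - 2) * (γ - 2) := by ring
  constructor
  · intro hpos
    have hγ : γ < 2/3 := by
      nlinarith [mul_nonneg (sq_nonneg M) (sq_nonneg (4 - 3*γ))]
    have hden : (0:ℝ) < (4 - 3*γ)^2 := by nlinarith
    exact ⟨hγ, by rw [lt_div_iff₀ hden]; linarith⟩
  · rintro ⟨hγ, hM⟩
    have hden : (0:ℝ) < (4 - 3*γ)^2 := by nlinarith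
    rw [lt_div_iff₀ hden] at hM
    linarith

theorem stmt18_general (γ M : ℝ) (hγ0 : 0 < γ) (hγ2 : γ < 2) :
    let q : ℝ × ℝ × ℝ → ℝ := fun σ =>
      -(3/2) * (γ - 2) * σ.1^2 - (3*γ/2) * σ.2.1^2
        + (1/2) * (4 - 3*γ) * σ.2.2^2 + (1/2) * (3*γ - 2)
    let P₃ : ℝ × ℝ × ℝ := (M * (3*γ - 4) / (Real.sqrt 6 * (γ - 2)), 0, 0)
    (P₃.1^2 + P₃.2.1^2 + P₃.2.2^2 ≤ 1 ↔ M^2 * (3*γ - 4)^2 ≤ 6 * (γ - 2)^2) ∧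
    q P₃ = (-M^2 * (4 - 3*γ)^2 + 2*γ*(3*γ - 8) + 8) / (4 * (γ - 2)) ∧
    (q P₃ < 0 ↔ (0 < γ ∧ γ < 2/3 ∧ M^2 < (2*γ*(3*γ - 8) + 8) / (4 - 3*γ)^2)) := by
  intro q P₃
  have hneg : γ - 2 < 0 := by linarith
  have hne : γ - 2 ≠ 0 := hneg.ne
  have hσ₂ : P₃.1 ^ 2 = M ^ 2 * (3*γ - 4) ^ 2 / (6 * (γ - 2) ^ 2) := by
    rw [sq_div_sqrt_six_mul, mul_pow]
  have hq : q P₃ = (-M^2 * (4 - 3*γ)^2 + 2*γ*(3*γ - 8) + 8) / (4 * (γ - 2)) := by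
    change -(3/2) * (γ - 2) * P₃.1 ^ 2 - (3*γ/2) * 0 ^ 2 + (1/2) * (4 - 3*γ) * 0 ^ 2
      + (1/2) * (3*γ - 2) = _
    rw [hσ₂]
    field_simp
    ring
  refine ⟨?_, hq, ?_⟩
  · change P₃.1 ^ 2 + 0 ^ 2 + 0 ^ 2 ≤ 1 ↔ _
    rw [hσ₂, zero_pow two_ne_zero, add_zero, add_zero, div_le_one (by nlinarith)]
  · rw [hq, div_lt_iff_of_neg (by linarith), zero_mul, decel_numerator_pos_iff hγ2]
    exact (and_iff_right hγ0).symm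

/-- The equilibrium `P₃ = (M(3γ−4)/(√6(γ−2)), 0, 0)` lies in the closed unit ball
iff `M²(3γ−4)² ≤ 6(γ−2)²`, its deceleration parameter equals
`(−M²(4−3γ)² + 2γ(3γ−8) + 8)/(4(γ−2))`, and `q < 0` iff `0 < γ < 2/3` and
`M² < (2γ(3γ−8)+8)/(4−3γ)²`. -/
theorem stmt18 (γ M : ℝ) (hγ0 : 0 < γ) (hγ2 : γ < 2) (hγ43 : γ ≠ 4/3) :
    let q : ℝ × ℝ × ℝ → ℝ := fun σ =>
      -(3/2) * (γ - 2) * σ.1^2 - (3*γ/2) * σ.2.1^2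
        + (1/2) * (4 - 3*γ) * σ.2.2^2 + (1/2) * (3*γ - 2)
    let P₃ : ℝ × ℝ × ℝ := (M * (3*γ - 4) / (Real.sqrt 6 * (γ - 2)), 0, 0)
    (P₃.1^2 + P₃.2.1^2 + P₃.2.2^2 ≤ 1 ↔ M^2 * (3*γ - 4)^2 ≤ 6 * (γ - 2)^2) ∧
    q P₃ = (-M^2 * (4 - 3*γ)^2 + 2*γ*(3*γ - 8) + 8) / (4 * (γ - 2)) ∧
    (q P₃ < 0 ↔ (0 < γ ∧ γ < 2/3 ∧ M^2 < (2*γ*(3*γ - 8) + 8) / (4 - 3*γ)^2)) :=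
  stmt18_general γ M hγ0 hγ2
end
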